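/- arXiv:1508.00127 — 7 statements merged into one kernel-verified Lean document; each statement's English description precedes it below -/
import Mathlib

section
/- Let X be a nonnegative random variable with cdf F and quantile function F^{-1}, and let h : [0,1] → [0,1] be differentiable with h(0)=0 and h(1)=1. If ∫₀¹ F^{-1}(t) h'(1−t) dt is finite, then ∫₀¹ F^{-1}(t) h'(1−t) dt = ∫₀^∞ h(1−F(x)) dx. -/
open MeasureTheory

theorem quantile_integral_eq_tail_integral
    (ν : Measure ℝ) [IsProbabilityMeasure ν] (hsupp : ν (Set.Iio 0) = 0)
    (F Q : ℝ → ℝ)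
    (hF : ∀ x, F x = (ν (Set.Iic x)).toReal)
    (hQ : ∀ t, Q t = sInf {x : ℝ | 0 ≤ x ∧ t ≤ F x})
    (h h' : ℝ → ℝ)
    (hd : ∀ t ∈ Set.Icc (0:ℝ) 1, HasDerivAt h (h' t) t)
    (hmap : ∀ t ∈ Set.Icc (0:ℝ) 1, h t ∈ Set.Icc (0:ℝ) 1)
    (h0 : h 0 = 0) (h1 : h 1 = 1)
    (hint : IntervalIntegrable (fun t => Q t * h' (1 - t)) volume 0 1) :
    ∫ t in (0:ℝ)..1, Q t * h' (1 - t) = ∫ x in Set.Ioi (0:ℝ), h (1 - F x) := by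
  classical
  -- F is the cdf
  have hFc : ∀ x, F x = ProbabilityTheory.cdf ν x := fun x => by
    rw [hF, ProbabilityTheory.cdf_eq_real, measureReal_def]
  have hFmono : Monotone F := fun a b hab => by
    rw [hFc, hFc]; exact ProbabilityTheory.monotone_cdf ν hab
  have hF0 : ∀ x, 0 ≤ F x := fun x => by rw [hFc]; exact ProbabilityTheory.cdf_nonneg ν x
  have hF1 : ∀ x, F x ≤ 1 := fun x => by rw [hFc]; exact ProbabilityTheory.cdf_le_one ν x
  have hFtop : Filter.Tendsto F Filter.atTop (nhds 1) := by
    have := ProbabilityTheory.tendsto_cdf_atTop (μ := ν)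
    refine this.congr fun x => (hFc x).symm
  have hFright : ∀ x, ContinuousWithinAt F (Set.Ici x) x := by
    intro x
    have := (ProbabilityTheory.cdf ν).right_continuous x
    refine this.congr (fun y _ => hFc y) (hFc x)
  -- basic facts about Q on (0,1)
  have hSne : ∀ t : ℝ, t < 1 → {x : ℝ | 0 ≤ x ∧ t ≤ F x}.Nonempty := by
    intro t ht
    obtain ⟨y, hy⟩ := (hFtop.eventually (eventually_ge_nhds ht)).exists
    exact ⟨max y 0, le_max_right y 0, hy.trans (hFmono (le_max_left y 0))⟩
  have hSbdd : ∀ t : ℝ, BddBelow {x : ℝ | 0 ≤ x ∧ t ≤ F x} :=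
    fun t => ⟨0, fun x hx => hx.1⟩
  have hQ0 : ∀ t : ℝ, t < 1 → 0 ≤ Q t := by
    intro t ht
    rw [hQ]
    exact le_csInf (hSne t ht) fun x hx => hx.1
  -- Galois connection
  have hgal : ∀ t : ℝ, t < 1 → ∀ x : ℝ, 0 ≤ x → (Q t ≤ x ↔ t ≤ F x) := by
    intro t ht x hx
    constructor
    · intro hQx
      have key : ∀ y, Q t < y → t ≤ F y := by
        intro y hy
        rw [hQ] at hy
        obtain ⟨z, hz, hzy⟩ := exists_lt_of_csInf_lt (hSne t ht) hy
        exact hz.2.trans (hFmono hzy.le)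
      have hQF : t ≤ F (Q t) := by
        have hmem : ∀ᶠ y in nhdsWithin (Q t) (Set.Ioi (Q t)), t ≤ F y :=
          Filter.eventually_of_mem self_mem_nhdsWithin fun y hy => key y hy
        have htend : Filter.Tendsto F (nhdsWithin (Q t) (Set.Ioi (Q t))) (nhds (F (Q t))) :=
          (hFright (Q t)).mono_left (nhdsWithin_mono _ Set.Ioi_subset_Ici_self)
        exact ge_of_tendsto htend hmem
      exact hQF.trans (hFmono hQx)
    · intro hFx
      rw [hQ]
      exact csInf_le (hSbdd t) ⟨hx, hFx⟩
  -- lower bound for Q past F x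
  have hQlb : ∀ x : ℝ, 0 ≤ x → ∀ t : ℝ, t < 1 → F x < t → x ≤ Q t := by
    intro x hx t ht hFx
    by_contra hc
    push_neg at hc
    exact absurd ((hgal t ht x hx).mp hc.le) (not_le.mpr hFx)
  set D : ℝ → ℝ := deriv h with hDdef
  have hD : ∀ t ∈ Set.Icc (0:ℝ) 1, h' t = D t := fun t ht => ((hd t ht).deriv).symm
  have hDmeas : Measurable D := measurable_deriv h
  set μt : Measure ℝ := volume.restrict (Set.Ioo 0 1) with hμt
  set μx : Measure ℝ := volume.restrict (Set.Ioi 0) with hμx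
  set f : ℝ → ℝ → ℝ := fun t x => Set.indicator {x' : ℝ | F x' < t} (fun _ => D (1 - t)) x
    with hfdef
  -- description of the x-section set
  have hsect : ∀ t : ℝ, 0 < t → t < 1 → {x' : ℝ | F x' < t} ∩ Set.Ioi 0 = Set.Ioo 0 (Q t) := by
    intro t ht0 ht1
    ext x
    simp only [Set.mem_inter_iff, Set.mem_setOf_eq, Set.mem_Ioi, Set.mem_Ioo]
    constructor
    · rintro ⟨hFx, hx⟩
      exact ⟨hx, lt_of_not_ge fun hc => absurd ((hgal t ht1 x hx.le).mp hc) (not_le.mpr hFx)⟩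
    · rintro ⟨hx, hxQ⟩
      refine ⟨?_, hx⟩
      by_contra hc
      push_neg at hc
      exact absurd ((hgal t ht1 x hx.le).mpr hc) (not_le.mpr hxQ)
  -- product kernel
  set g : ℝ × ℝ → ℝ :=
    Set.indicator {p : ℝ × ℝ | F p.2 < p.1} (fun p => D (1 - p.1)) with hgdef
  have hset : MeasurableSet {p : ℝ × ℝ | F p.2 < p.1} :=
    measurableSet_lt (hFmono.measurable.comp measurable_snd) measurable_fst
  have hgm : Measurable g :=
    ((hDmeas.comp (measurable_const.sub measurable_fst)).indicator hset)
  have hgf : ∀ t x : ℝ, g (t, x) = f t x := by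
    intro t x
    simp only [hgdef, hfdef, Set.indicator_apply, Set.mem_setOf_eq]
  -- integrability of Q t * D (1 - t) on (0,1)
  have hint1 : IntegrableOn (fun t => Q t * h' (1 - t)) (Set.Ioc 0 1) volume :=
    (intervalIntegrable_iff_integrableOn_Ioc_of_le zero_le_one).mp hint
  have hint2 : IntegrableOn (fun t => Q t * D (1 - t)) (Set.Ioo 0 1) volume := by
    refine ((hint1.mono_set Set.Ioo_subset_Ioc_self).congr_fun ?_ measurableSet_Ioo)
    intro t ht
    show Q t * h' (1 - t) = Q t * D (1 - t)
    rw [hD (1 - t) ⟨by linarith [ht.2], by linarith [ht.1]⟩]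
  -- value and norm of the inner x-integral
  have hsmeas : ∀ t : ℝ, MeasurableSet {x' : ℝ | F x' < t} := fun t =>
    measurableSet_lt hFmono.measurable measurable_const
  have hvol : ∀ t ∈ Set.Ioo (0:ℝ) 1, μx {x' : ℝ | F x' < t} = ENNReal.ofReal (Q t) := by
    intro t ht
    rw [hμx, Measure.restrict_apply (hsmeas t), hsect t ht.1 ht.2, Real.volume_Ioo, sub_zero]
  have hval : ∀ t ∈ Set.Ioo (0:ℝ) 1, ∫ x, f t x ∂μx = Q t * D (1 - t) := by
    intro t ht
    rw [hfdef]
    simp only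
    rw [integral_indicator (hsmeas t), setIntegral_const, measureReal_def, hvol t ht,
      ENNReal.toReal_ofReal (hQ0 t ht.2), smul_eq_mul]
  have hnorm : ∀ t ∈ Set.Ioo (0:ℝ) 1, ∫ x, ‖f t x‖ ∂μx = ‖Q t * D (1 - t)‖ := by
    intro t ht
    have : (fun x => ‖f t x‖) =
        Set.indicator {x' : ℝ | F x' < t} (fun _ => ‖D (1 - t)‖) := by
      funext x
      rw [hfdef]
      simp only
      rw [norm_indicator_eq_indicator_norm]
    rw [this, integral_indicator (hsmeas t), setIntegral_const, measureReal_def, hvol t ht,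
      ENNReal.toReal_ofReal (hQ0 t ht.2), smul_eq_mul, norm_mul,
      Real.norm_of_nonneg (hQ0 t ht.2)]
  have hsecint : ∀ t ∈ Set.Ioo (0:ℝ) 1, Integrable (f t) μx := by
    intro t ht
    rw [hfdef]
    simp only
    rw [integrable_indicator_iff (hsmeas t)]
    refine (integrableOn_const_iff).mpr (Or.inr ?_)
    rw [hvol t ht]
    exact ENNReal.ofReal_lt_top
  -- integrability on the product
  have hItg : Integrable (Function.uncurry f) (μt.prod μx) := by
    have huncurry : Function.uncurry f = g := by
      funext p
      cases p with
      | mk t x => exact (hgf t x).symm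
    rw [huncurry, integrable_prod_iff hgm.aestronglyMeasurable]
    constructor
    · refine (ae_restrict_iff' measurableSet_Ioo).mpr (Filter.Eventually.of_forall ?_)
      intro t ht
      have := hsecint t ht
      simpa [hgf] using this
    · refine (hint2.norm.congr ?_)
      refine (ae_restrict_iff' measurableSet_Ioo).mpr (Filter.Eventually.of_forall ?_)
      intro t ht
      simpa [hgf] using (hnorm t ht).symm
  -- inner t-integral for fixed x
  have step3 : ∀ x ∈ Set.Ioi (0:ℝ), ∫ t, f t x ∂μt = h (1 - F x) := by
    intro x hx
    have hx0 : (0:ℝ) < x := hx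
    have hfx : (fun t => f t x) = Set.indicator (Set.Ioi (F x)) (fun t => D (1 - t)) := by
      funext t
      rw [hfdef]
      simp only [Set.indicator_apply, Set.mem_setOf_eq, Set.mem_Ioi]
    have hinter : Set.Ioo (0:ℝ) 1 ∩ Set.Ioi (F x) = Set.Ioo (F x) 1 := by
      ext t
      simp only [Set.mem_inter_iff, Set.mem_Ioo, Set.mem_Ioi]
      constructor
      · rintro ⟨⟨_, ht1⟩, htF⟩; exact ⟨htF, ht1⟩
      · rintro ⟨htF, ht1⟩; exact ⟨⟨lt_of_le_of_lt (hF0 x) htF, ht1⟩, htF⟩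
    rw [hfx, hμt, integral_indicator measurableSet_Ioi,
      Measure.restrict_restrict measurableSet_Ioi, Set.inter_comm, hinter]
    rcases le_or_gt 1 (F x) with hx1 | hx1
    · have hFx1 : F x = 1 := le_antisymm (hF1 x) hx1
      rw [hFx1, Set.Ioo_self, Measure.restrict_empty, integral_zero_measure, sub_self, h0]
    · -- integrability of D (1 - t) on Ioo (F x) 1
      have hbase : IntegrableOn (fun t => Q t * D (1 - t)) (Set.Ioo (F x) 1) volume :=
        hint2.mono_set (Set.Ioo_subset_Ioo (hF0 x) le_rfl)
      have hDi : IntegrableOn (fun t => D (1 - t)) (Set.Ioo (F x) 1) volume := by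
        refine Integrable.mono (hbase.const_mul x⁻¹)
          ((hDmeas.comp (measurable_const.sub measurable_id)).aestronglyMeasurable) ?_
        refine (ae_restrict_iff' measurableSet_Ioo).mpr (Filter.Eventually.of_forall ?_)
        intro t ht
        have hxQ : x ≤ Q t := hQlb x hx0.le t ht.2 ht.1
        rw [Real.norm_eq_abs, Real.norm_eq_abs, abs_mul, abs_mul,
          abs_of_nonneg (inv_nonneg.mpr hx0.le), abs_of_nonneg (hx0.le.trans hxQ)]
        have h1 : (1:ℝ) ≤ x⁻¹ * Q t := by
          rw [inv_mul_eq_div, le_div_iff₀ hx0, one_mul]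
          exact hxQ
        nlinarith [abs_nonneg (D (1 - t))]
      have hIoo : ∫ t in Set.Ioo (F x) 1, D (1 - t) = ∫ t in (F x)..1, D (1 - t) := by
        rw [intervalIntegral.integral_of_le hx1.le, integral_Ioc_eq_integral_Ioo]
      rw [hIoo]
      have hderiv : ∀ t ∈ Set.uIcc (F x) 1, HasDerivAt (fun s => -h (1 - s)) (D (1 - t)) t := by
        intro t ht
        rw [Set.uIcc_of_le hx1.le] at ht
        have hmem : (1 - t) ∈ Set.Icc (0:ℝ) 1 := ⟨by linarith [ht.2], by linarith [(hF0 x).trans ht.1]⟩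
        have H2 : HasDerivAt (fun s : ℝ => 1 - s) (-1) t := (hasDerivAt_id t).const_sub 1
        have H3 := (hd (1 - t) hmem).comp t H2
        have H4 := H3.neg
        refine H4.congr_deriv ?_
        rw [hD (1 - t) hmem]
        ring
      have hii : IntervalIntegrable (fun t => D (1 - t)) volume (F x) 1 :=
        (intervalIntegrable_iff_integrableOn_Ioo_of_le hx1.le).mpr hDi
      rw [intervalIntegral.integral_eq_sub_of_hasDerivAt hderiv hii]
      simp [h0]
  -- assemble
  rw [intervalIntegral.integral_of_le zero_le_one, integral_Ioc_eq_integral_Ioo]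
  have e1 : ∫ t in Set.Ioo (0:ℝ) 1, Q t * h' (1 - t) =
      ∫ t, (∫ x, f t x ∂μx) ∂μt := by
    rw [hμt]
    refine setIntegral_congr_fun measurableSet_Ioo fun t ht => ?_
    rw [hD (1 - t) ⟨by linarith [ht.2], by linarith [ht.1]⟩, ← hval t ht]
  rw [e1, integral_integral_swap hItg, hμx]
  exact setIntegral_congr_fun measurableSet_Ioi fun x hx => step3 x hx
end

section
/- Let X be a nonnegative random variable with cdf F, positive finite mean μ_F, and let h be twice differentiable and convex on [0,1] with h(0)=0, h(1)=1, h'(0) ≠ 1. If π_h has density f(t) = t·h''(1−t)/(1−h'(0)) on (0,1), then E[1 − LCE_F(π_h)/μ_F] = (1/(1−h'(0)))·(1 − (1/μ_F)∫₀^∞ h(1−F(x)) dx). -/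
open MeasureTheory Set

theorem dwk_generalized_index
    (ν : Measure ℝ) [IsProbabilityMeasure ν] (hsupp : ν (Set.Iio 0) = 0)
    (F Q : ℝ → ℝ)
    (hF : ∀ x, F x = (ν (Set.Iic x)).toReal)
    (hQ : ∀ t, Q t = sInf {x : ℝ | 0 ≤ x ∧ t ≤ F x})
    (μF : ℝ) (hμF : μF = ∫ t in Set.Ioo (0:ℝ) 1, Q t) (hμpos : 0 < μF)
    (hQint : IntegrableOn Q (Set.Ioo 0 1) volume)
    (h h' h'' : ℝ → ℝ)
    (hd1 : ∀ t ∈ Set.Icc (0:ℝ) 1, HasDerivAt h (h' t) t)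
    (hd2 : ∀ t ∈ Set.Icc (0:ℝ) 1, HasDerivAt h' (h'' t) t)
    (hconv : ∀ t ∈ Set.Ioo (0:ℝ) 1, 0 ≤ h'' t)
    (hmap : ∀ t ∈ Set.Icc (0:ℝ) 1, h t ∈ Set.Icc (0:ℝ) 1)
    (h0 : h 0 = 0) (h1 : h 1 = 1) (hne : h' 0 ≠ 1)
    (f : ℝ → ℝ)
    (hf : ∀ t ∈ Set.Ioo (0:ℝ) 1, f t = t * h'' (1 - t) / (1 - h' 0))
    (LCE : ℝ → ℝ) (hLCE : ∀ p, LCE p = (1 / p) * ∫ t in (0:ℝ)..p, Q t)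
    (hint : IntegrableOn (fun t => Q t * h' (1 - t)) (Set.Ioo 0 1) volume) :
    ∫ p in Set.Ioo (0:ℝ) 1, (1 - LCE p / μF) * f p
      = (1 / (1 - h' 0)) * (1 - (1 / μF) * ∫ x in Set.Ioi (0:ℝ), h (1 - F x)) := by
  have hμne : μF ≠ 0 := ne_of_gt hμpos
  set c : ℝ := 1 - h' 0 with hc
  have hcne : c ≠ 0 := sub_ne_zero.mpr (Ne.symm hne)
  set G : ℝ → ℝ := fun p => ∫ t in Set.Ioo 0 p, Q t with hG
  set K : ℝ := ∫ t in Set.Ioo (0:ℝ) 1, Q t * h' (1 - t) with hK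
  -- ## basic facts about F
  have hF0 : ∀ x, 0 ≤ F x := fun x => by rw [hF]; exact ENNReal.toReal_nonneg
  have hF1 : ∀ x, F x ≤ 1 := fun x => by
    rw [hF]
    exact ENNReal.toReal_le_of_le_ofReal zero_le_one (by simpa using prob_le_one (μ := ν) (s := Set.Iic x))
  have hFmono : Monotone F := fun x y hxy => by
    rw [hF, hF]
    exact ENNReal.toReal_mono (measure_ne_top ν _) (measure_mono (Set.Iic_subset_Iic.mpr hxy))
  have hFmeas : Measurable F := hFmono.measurable
  -- ## basic facts about h, h', h''
  have hconth : ContinuousOn h (Set.Icc 0 1) := fun t ht => (hd1 t ht).continuousAt.continuousWithinAt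
  have hconth' : ContinuousOn h' (Set.Icc 0 1) := fun t ht => (hd2 t ht).continuousAt.continuousWithinAt
  have h'mono : MonotoneOn h' (Set.Icc 0 1) := by
    apply monotoneOn_of_deriv_nonneg (convex_Icc 0 1) hconth'
    · intro t ht
      rw [interior_Icc] at ht
      exact (hd2 t (Set.Ioo_subset_Icc_self ht)).differentiableAt.differentiableWithinAt
    · intro t ht
      rw [interior_Icc] at ht
      rw [(hd2 t (Set.Ioo_subset_Icc_self ht)).deriv]
      exact hconv t ht
  have h'0nn : 0 ≤ h' 0 := by
    have hd : HasDerivWithinAt h (h' 0) (Set.Ioi 0) 0 :=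
      (hd1 0 ⟨le_refl 0, zero_le_one⟩).hasDerivWithinAt
    rw [hasDerivWithinAt_iff_tendsto_slope] at hd
    have hset : Set.Ioi (0:ℝ) \ {0} = Set.Ioi 0 := Set.diff_singleton_eq_self (by simp)
    rw [hset] at hd
    refine ge_of_tendsto hd ?_
    filter_upwards [Ioo_mem_nhdsGT_of_mem ⟨le_refl 0, zero_lt_one⟩] with t ht
    have h0t : 0 ≤ h t := (hmap t ⟨le_of_lt ht.1, le_of_lt ht.2⟩).1
    simp only [slope_def_field]
    rw [div_nonneg_iff]
    exact Or.inl ⟨by simpa [h0] using h0t, by simpa using le_of_lt ht.1⟩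
  have h'nn : ∀ t ∈ Set.Icc (0:ℝ) 1, 0 ≤ h' t := fun t ht =>
    le_trans h'0nn (h'mono ⟨le_refl 0, zero_le_one⟩ ht ht.1)
  -- interval integrability of h''
  have h''II : IntervalIntegrable h'' volume 0 1 := by
    apply intervalIntegral.intervalIntegrable_deriv_of_nonneg
    · rwa [Set.uIcc_of_le zero_le_one]
    · simpa using fun t ht => hd2 t (Set.Ioo_subset_Icc_self ht)
    · simpa using hconv
  have h''refII : IntervalIntegrable (fun p => h'' (1 - p)) volume 0 1 := by
    have := (h''II.comp_sub_left 1).symm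
    simpa using this
  have h''refInt : IntegrableOn (fun p => h'' (1 - p)) (Set.Ioo 0 1) volume :=
    h''refII.1.mono_set Set.Ioo_subset_Ioc_self
  -- FTC for h'' and h'
  have FTC2 : ∀ a b : ℝ, a ∈ Set.Icc (0:ℝ) 1 → b ∈ Set.Icc (0:ℝ) 1 →
      ∫ t in a..b, h'' t = h' b - h' a := by
    intro a b ha hb
    have hsub : Set.uIcc a b ⊆ Set.Icc (0:ℝ) 1 := by
      rw [← Set.uIcc_of_le (zero_le_one (α := ℝ))]
      exact Set.uIcc_subset_uIcc (by rwa [Set.uIcc_of_le zero_le_one]) (by rwa [Set.uIcc_of_le zero_le_one])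
    refine intervalIntegral.integral_eq_sub_of_hasDerivAt (fun t ht => hd2 t (hsub ht)) ?_
    refine h''II.mono_set ?_
    rwa [Set.uIcc_of_le (zero_le_one (α := ℝ))]
  have innerA2 : ∀ t ∈ Set.Icc (0:ℝ) 1, ∫ p in Set.Ioo t 1, h'' (1 - p) = h' (1 - t) - h' 0 := by
    intro t ht
    rw [← integral_Ioc_eq_integral_Ioo, ← intervalIntegral.integral_of_le ht.2]
    rw [intervalIntegral.integral_comp_sub_left (fun u => h'' u) 1]
    simpa using FTC2 0 (1 - t) ⟨le_refl 0, zero_le_one⟩ ⟨by linarith [ht.2], by linarith [ht.1]⟩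
  have hlayer : ∀ s ∈ Set.Icc (0:ℝ) 1, ∫ p in Set.Ioo s 1, h' (1 - p) = h (1 - s) := by
    intro s hs
    have hsub : Set.uIcc s 1 ⊆ Set.Icc (0:ℝ) 1 := by
      rw [Set.uIcc_of_le hs.2]
      exact fun x hx => ⟨le_trans hs.1 hx.1, hx.2⟩
    have hderiv : ∀ p ∈ Set.uIcc s 1, HasDerivAt (fun q => -h (1 - q)) (h' (1 - p)) p := by
      intro p hp
      have h1p : (1:ℝ) - p ∈ Set.Icc (0:ℝ) 1 := by
        have := hsub hp
        exact ⟨by linarith [this.2], by linarith [this.1]⟩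
      have d1 : HasDerivAt (fun q : ℝ => 1 - q) (-1) p := by
        simpa using (hasDerivAt_id p).const_sub 1
      have := ((hd1 (1 - p) h1p).comp p d1).neg
      simp only [mul_neg, mul_one, neg_neg] at this
      exact this
    have hcint : IntervalIntegrable (fun p => h' (1 - p)) volume s 1 := by
      apply ContinuousOn.intervalIntegrable
      exact hconth'.comp ((continuous_const.sub continuous_id).continuousOn)
        (fun y hy => ⟨by linarith [(hsub hy).2], by linarith [(hsub hy).1]⟩)
    have := intervalIntegral.integral_eq_sub_of_hasDerivAt hderiv hcint
    rw [← integral_Ioc_eq_integral_Ioo, ← intervalIntegral.integral_of_le hs.2, this]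
    simp [h0]
  -- ## quantile facts
  have hFtend : Filter.Tendsto F Filter.atTop (nhds 1) := by
    have h1' := (ENNReal.tendsto_toReal (a := ν Set.univ) (by simp)).comp
      (tendsto_measure_Iic_atTop ν)
    have : (fun x => (ν (Set.Iic x)).toReal) = F := by
      funext x; rw [hF]
    rw [Function.comp_def] at h1'
    rw [this] at h1'
    simpa using h1'
  have Sne : ∀ p : ℝ, p < 1 → {x : ℝ | 0 ≤ x ∧ p ≤ F x}.Nonempty := by
    intro p hp
    have hev : ∀ᶠ x in Filter.atTop, p ≤ F x := hFtend.eventually (eventually_ge_nhds hp)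
    rcases (hev.and (Filter.eventually_ge_atTop (0:ℝ))).exists with ⟨x, hx1, hx2⟩
    exact ⟨x, hx2, hx1⟩
  have Sbdd : ∀ p : ℝ, BddBelow {x : ℝ | 0 ≤ x ∧ p ≤ F x} := fun p =>
    ⟨0, fun x hx => hx.1⟩
  have Qnn : ∀ p, p < 1 → 0 ≤ Q p := by
    intro p hp
    rw [hQ]
    exact le_csInf (Sne p hp) fun x hx => hx.1
  have volQ : ∀ p ∈ Set.Ioo (0:ℝ) 1, volume {x : ℝ | 0 < x ∧ F x < p} = ENNReal.ofReal (Q p) := by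
    intro p hp
    have sub1 : Set.Ioo 0 (Q p) ⊆ {x : ℝ | 0 < x ∧ F x < p} := by
      intro x hx
      refine ⟨hx.1, ?_⟩
      by_contra hle
      push_neg at hle
      have : Q p ≤ x := by
        rw [hQ]; exact csInf_le (Sbdd p) ⟨le_of_lt hx.1, hle⟩
      exact absurd hx.2 (not_lt.mpr this)
    have sub2 : {x : ℝ | 0 < x ∧ F x < p} ⊆ Set.Ioc 0 (Q p) := by
      intro x hx
      refine ⟨hx.1, ?_⟩
      rw [hQ]
      refine le_csInf (Sne p hp.2) fun y hy => ?_
      by_contra hlt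
      push_neg at hlt
      exact absurd (lt_of_le_of_lt (hFmono hlt.le) hx.2) (not_lt.mpr hy.2)
    refine le_antisymm ?_ ?_
    · calc volume {x : ℝ | 0 < x ∧ F x < p} ≤ volume (Set.Ioc 0 (Q p)) := measure_mono sub2
        _ = ENNReal.ofReal (Q p) := by rw [Real.volume_Ioc, sub_zero]
    · calc ENNReal.ofReal (Q p) = volume (Set.Ioo 0 (Q p)) := by rw [Real.volume_Ioo, sub_zero]
        _ ≤ volume {x : ℝ | 0 < x ∧ F x < p} := measure_mono sub1
  have hQae : ∀ᵐ t ∂(volume.restrict (Set.Ioo (0:ℝ) 1)), 0 ≤ Q t :=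
    (ae_restrict_mem measurableSet_Ioo).mono fun t ht => Qnn t ht.2
  -- main pieces
  have key1II : IntervalIntegrable (fun p => p * h'' (1 - p)) volume 0 1 :=
    h''refII.continuousOn_mul continuousOn_id
  have key1int : IntegrableOn (fun p => p * h'' (1 - p)) (Set.Ioo 0 1) volume :=
    key1II.1.mono_set Set.Ioo_subset_Ioc_self
  have key1 : ∫ p in Set.Ioo (0:ℝ) 1, p * h'' (1 - p) = c := by
    have hderiv : ∀ p ∈ Set.uIcc (0:ℝ) 1,
        HasDerivAt (fun q => -(q * h' (1 - q)) - h (1 - q)) (p * h'' (1 - p)) p := by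
      intro p hp
      rw [Set.uIcc_of_le (zero_le_one (α := ℝ))] at hp
      have h1p : (1:ℝ) - p ∈ Set.Icc (0:ℝ) 1 := ⟨by linarith [hp.2], by linarith [hp.1]⟩
      have d1 : HasDerivAt (fun q : ℝ => 1 - q) (-1) p := by
        simpa using (hasDerivAt_id p).const_sub 1
      have dh' : HasDerivAt (fun q => h' (1 - q)) (-h'' (1 - p)) p := by
        have := (hd2 (1 - p) h1p).comp p d1
        simp only [mul_neg, mul_one] at this
        exact this
      have dh : HasDerivAt (fun q => h (1 - q)) (-h' (1 - p)) p := by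
        have := (hd1 (1 - p) h1p).comp p d1
        simp only [mul_neg, mul_one] at this
        exact this
      have dprod : HasDerivAt (fun q => q * h' (1 - q))
          (1 * h' (1 - p) + p * -h'' (1 - p)) p := (hasDerivAt_id p).mul dh'
      have := dprod.neg.sub dh
      refine this.congr_deriv ?_
      ring
    have := intervalIntegral.integral_eq_sub_of_hasDerivAt hderiv key1II
    rw [← integral_Ioc_eq_integral_Ioo, ← intervalIntegral.integral_of_le (zero_le_one (α := ℝ)), this]
    simp only [h0, h1, sub_self, sub_zero, one_mul, zero_mul, mul_one]
    ring
  have Gcont : ContinuousOn G (Set.Icc 0 1) := by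
    have hIcc : IntegrableOn Q (Set.Icc 0 1) volume := by
      rwa [integrableOn_Icc_iff_integrableOn_Ioo]
    have := intervalIntegral.continuousOn_primitive (a := 0) (b := 1) hIcc
    refine this.congr fun p hp => ?_
    rw [hG]
    exact (integral_Ioc_eq_integral_Ioo).symm
  have Gnn : ∀ p ∈ Set.Ioo (0:ℝ) 1, 0 ≤ G p := by
    intro p hp
    refine setIntegral_nonneg measurableSet_Ioo fun t ht => ?_
    exact Qnn t (lt_of_lt_of_le ht.2 hp.2.le)
  have GleμF : ∀ p ∈ Set.Ioo (0:ℝ) 1, G p ≤ μF := by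
    intro p hp
    rw [hμF, hG]
    exact setIntegral_mono_set hQint hQae (HasSubset.Subset.eventuallyLE (Set.Ioo_subset_Ioo_right hp.2.le))
  have Gmeas : AEStronglyMeasurable G (volume.restrict (Set.Ioo (0:ℝ) 1)) :=
    (Gcont.mono Set.Ioo_subset_Icc_self).aestronglyMeasurable measurableSet_Ioo
  have key2meas : AEStronglyMeasurable (fun p => G p * h'' (1 - p))
      (volume.restrict (Set.Ioo (0:ℝ) 1)) := Gmeas.mul h''refInt.1
  have key2int : IntegrableOn (fun p => G p * h'' (1 - p)) (Set.Ioo 0 1) volume := by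
    refine Integrable.mono' (h''refInt.const_mul μF) key2meas ?_
    filter_upwards [ae_restrict_mem measurableSet_Ioo] with p hp
    have h1p : (1:ℝ) - p ∈ Set.Ioo (0:ℝ) 1 := ⟨by linarith [hp.2], by linarith [hp.1]⟩
    have hnn : 0 ≤ G p * h'' (1 - p) := mul_nonneg (Gnn p hp) (hconv _ h1p)
    rw [Real.norm_of_nonneg hnn]
    exact mul_le_mul_of_nonneg_right (GleμF p hp) (hconv _ h1p)
  have hset1 : ∀ p : ℝ, p ≤ 1 → Set.Iio p ∩ Set.Ioo 0 1 = Set.Ioo 0 p := by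
    intro p hp
    ext x
    simp only [Set.mem_inter_iff, Set.mem_Iio, Set.mem_Ioo]
    constructor
    · rintro ⟨h1, h2, h3⟩; exact ⟨h2, h1⟩
    · rintro ⟨h1, h2⟩; exact ⟨h2, h1, lt_of_lt_of_le h2 hp⟩
  have hset2 : ∀ t : ℝ, 0 ≤ t → Set.Ioi t ∩ Set.Ioo 0 1 = Set.Ioo t 1 := by
    intro t ht
    ext x
    simp only [Set.mem_inter_iff, Set.mem_Ioi, Set.mem_Ioo]
    constructor
    · rintro ⟨h1, h2, h3⟩; exact ⟨h1, h3⟩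
    · rintro ⟨h1, h2⟩; exact ⟨h1, lt_of_le_of_lt ht h1, h2⟩
  have hQm : AEMeasurable (fun t => ENNReal.ofReal (Q t)) (volume.restrict (Set.Ioo (0:ℝ) 1)) :=
    ENNReal.measurable_ofReal.comp_aemeasurable hQint.1.aemeasurable
  have hhm : AEMeasurable (fun p => ENNReal.ofReal (h'' (1 - p))) (volume.restrict (Set.Ioo (0:ℝ) 1)) :=
    ENNReal.measurable_ofReal.comp_aemeasurable h''refInt.1.aemeasurable
  have key2 : ∫ p in Set.Ioo (0:ℝ) 1, G p * h'' (1 - p) = K - h' 0 * μF := by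
    have hre : (fun t => Q t * (h' (1 - t) - h' 0)) = fun t => Q t * h' (1 - t) - Q t * h' 0 := by
      funext t; ring
    have RHSint : IntegrableOn (fun t => Q t * (h' (1 - t) - h' 0)) (Set.Ioo 0 1) volume := by
      rw [hre]; exact hint.sub (hQint.mul_const _)
    have RHSnn : ∀ t ∈ Set.Ioo (0:ℝ) 1, 0 ≤ Q t * (h' (1 - t) - h' 0) := by
      intro t ht
      refine mul_nonneg (Qnn t ht.2) (sub_nonneg.mpr ?_)
      exact h'mono ⟨le_refl 0, zero_le_one⟩ ⟨by linarith [ht.2], by linarith [ht.1]⟩ (by linarith [ht.2])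
    have RHSval : ∫ t in Set.Ioo (0:ℝ) 1, Q t * (h' (1 - t) - h' 0) = K - h' 0 * μF := by
      rw [hre, integral_sub hint (hQint.mul_const _), ← hK, integral_mul_const, ← hμF]
      ring
    set U : ℝ × ℝ → ENNReal := fun q =>
      Set.indicator {q : ℝ × ℝ | q.2 < q.1}
        (fun q => ENNReal.ofReal (Q q.2) * ENNReal.ofReal (h'' (1 - q.1))) q with hU
    have hUm : AEMeasurable U
        ((volume.restrict (Set.Ioo (0:ℝ) 1)).prod (volume.restrict (Set.Ioo (0:ℝ) 1))) :=
      ((hQm.comp_snd).fun_mul (hhm.comp_fst)).indicator (measurableSet_lt measurable_snd measurable_fst)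
    have inner1 : ∀ p ∈ Set.Ioo (0:ℝ) 1,
        ∫⁻ t in Set.Ioo (0:ℝ) 1, U (p, t) = ENNReal.ofReal (G p * h'' (1 - p)) := by
      intro p hp
      have hptw : ∀ t, U (p, t) =
          Set.indicator (Set.Iio p) (fun t => ENNReal.ofReal (Q t) * ENNReal.ofReal (h'' (1 - p))) t := by
        intro t
        simp [hU, Set.indicator_apply, Set.mem_Iio]
      simp only [hptw]
      rw [lintegral_indicator measurableSet_Iio, Measure.restrict_restrict measurableSet_Iio,
        hset1 p hp.2.le]
      rw [lintegral_mul_const'' _ (hQm.mono_measure (Measure.restrict_mono (Set.Ioo_subset_Ioo_right hp.2.le) le_rfl))]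
      rw [← ofReal_integral_eq_lintegral_ofReal
        (hQint.mono_set (Set.Ioo_subset_Ioo_right hp.2.le))
        ((ae_restrict_mem measurableSet_Ioo).mono fun t ht => Qnn t (lt_of_lt_of_le ht.2 hp.2.le))]
      rw [← ENNReal.ofReal_mul (Gnn p hp)]
    have inner2 : ∀ t ∈ Set.Ioo (0:ℝ) 1,
        ∫⁻ p in Set.Ioo (0:ℝ) 1, U (p, t) = ENNReal.ofReal (Q t * (h' (1 - t) - h' 0)) := by
      intro t ht
      have hptw : ∀ p, U (p, t) =
          Set.indicator (Set.Ioi t) (fun p => ENNReal.ofReal (Q t) * ENNReal.ofReal (h'' (1 - p))) p := by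
        intro p
        simp [hU, Set.indicator_apply, Set.mem_Ioi]
      simp only [hptw]
      rw [lintegral_indicator measurableSet_Ioi, Measure.restrict_restrict measurableSet_Ioi,
        hset2 t ht.1.le]
      rw [lintegral_const_mul'' _ (hhm.mono_measure (Measure.restrict_mono (Set.Ioo_subset_Ioo_left ht.1.le) le_rfl))]
      rw [← ofReal_integral_eq_lintegral_ofReal
        (h''refInt.mono_set (Set.Ioo_subset_Ioo_left ht.1.le))
        ((ae_restrict_mem measurableSet_Ioo).mono fun p hp => hconv (1 - p)
          ⟨by linarith [hp.2], by linarith [ht.1, hp.1]⟩)]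
      rw [innerA2 t ⟨ht.1.le, ht.2.le⟩, ← ENNReal.ofReal_mul (Qnn t ht.2)]
    have hswap := lintegral_lintegral_swap (μ := volume.restrict (Set.Ioo (0:ℝ) 1))
      (ν := volume.restrict (Set.Ioo (0:ℝ) 1)) (f := fun p t => U (p, t)) hUm
    have lhs1 : ∫⁻ p in Set.Ioo (0:ℝ) 1, ENNReal.ofReal (G p * h'' (1 - p))
        = ∫⁻ t in Set.Ioo (0:ℝ) 1, ENNReal.ofReal (Q t * (h' (1 - t) - h' 0)) := by
      rw [← setLIntegral_congr_fun measurableSet_Ioo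
        inner1, ← setLIntegral_congr_fun measurableSet_Ioo inner2]
      exact hswap
    have key2nn : 0 ≤ ∫ p in Set.Ioo (0:ℝ) 1, G p * h'' (1 - p) := by
      refine setIntegral_nonneg measurableSet_Ioo fun p hp => ?_
      exact mul_nonneg (Gnn p hp) (hconv (1 - p) ⟨by linarith [hp.2], by linarith [hp.1]⟩)
    have RHSnn' : 0 ≤ ∫ t in Set.Ioo (0:ℝ) 1, Q t * (h' (1 - t) - h' 0) :=
      setIntegral_nonneg measurableSet_Ioo RHSnn
    have hofreal : ENNReal.ofReal (∫ p in Set.Ioo (0:ℝ) 1, G p * h'' (1 - p))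
        = ENNReal.ofReal (∫ t in Set.Ioo (0:ℝ) 1, Q t * (h' (1 - t) - h' 0)) := by
      rw [ofReal_integral_eq_lintegral_ofReal key2int
        ((ae_restrict_mem measurableSet_Ioo).mono fun p hp =>
          mul_nonneg (Gnn p hp) (hconv (1 - p) ⟨by linarith [hp.2], by linarith [hp.1]⟩)),
        ofReal_integral_eq_lintegral_ofReal RHSint
        ((ae_restrict_mem measurableSet_Ioo).mono RHSnn)]
      exact lhs1
    rw [← RHSval]
    exact (ENNReal.ofReal_eq_ofReal_iff key2nn RHSnn').mp hofreal
  have keyB : ∫ x in Set.Ioi (0:ℝ), h (1 - F x) = K := by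
    set clamp : ℝ → ℝ := fun y => max 0 (min 1 y) with hclamp
    have clampcont : Continuous clamp := continuous_const.max (continuous_const.min continuous_id)
    have clampmem : ∀ y, clamp y ∈ Set.Icc (0:ℝ) 1 := fun y =>
      ⟨le_max_left _ _, max_le zero_le_one (min_le_left _ _)⟩
    have clampeq : ∀ y ∈ Set.Icc (0:ℝ) 1, clamp y = y := by
      intro y hy
      rw [hclamp]
      simp only [min_eq_right hy.2, max_eq_right hy.1]
    have h1F : ∀ x, (1 : ℝ) - F x ∈ Set.Icc (0:ℝ) 1 := fun x =>
      ⟨by linarith [hF1 x], by linarith [hF0 x]⟩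
    have chcont : Continuous (fun y => h (clamp y)) := hconth.comp_continuous clampcont clampmem
    have ch'cont : Continuous (fun y => h' (clamp y)) := hconth'.comp_continuous clampcont clampmem
    have hmeasInt : AEStronglyMeasurable (fun x => h (1 - F x))
        (volume.restrict (Set.Ioi (0:ℝ))) := by
      have heq : (fun x => h (1 - F x)) = (fun y => h (clamp y)) ∘ (fun x => 1 - F x) := by
        funext x
        simp only [Function.comp_apply, clampeq _ (h1F x)]
      rw [heq]
      exact (chcont.measurable.comp (measurable_const.sub hFmeas)).aestronglyMeasurable
    have hnnInt : 0 ≤ᵐ[volume.restrict (Set.Ioi (0:ℝ))] fun x => h (1 - F x) :=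
      Filter.Eventually.of_forall fun x => (hmap _ (h1F x)).1
    have h'refInt : ∀ s ∈ Set.Icc (0:ℝ) 1, IntegrableOn (fun p => h' (1 - p)) (Set.Ioo s 1) volume := by
      intro s hs
      have hcont2 : ContinuousOn (fun p => h' (1 - p)) (Set.Icc s 1) :=
        hconth'.comp ((continuous_const.sub continuous_id).continuousOn)
          (fun y hy => ⟨by linarith [hy.2], by linarith [hs.1, hy.1]⟩)
      exact (hcont2.integrableOn_Icc).mono_set Set.Ioo_subset_Icc_self
    set V : ℝ × ℝ → ENNReal := fun q =>
      Set.indicator {q : ℝ × ℝ | F q.1 < q.2}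
        (fun q => ENNReal.ofReal (h' (clamp (1 - q.2)))) q with hV
    have hVm : AEMeasurable V
        ((volume.restrict (Set.Ioi (0:ℝ))).prod (volume.restrict (Set.Ioo (0:ℝ) 1))) :=
      ((ENNReal.measurable_ofReal.comp
        (ch'cont.measurable.comp (measurable_const.sub measurable_snd))).aemeasurable).indicator
        (measurableSet_lt (hFmeas.comp measurable_fst) measurable_snd)
    have innerB1 : ∀ x ∈ Set.Ioi (0:ℝ),
        ∫⁻ p in Set.Ioo (0:ℝ) 1, V (x, p) = ENNReal.ofReal (h (1 - F x)) := by
      intro x hx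
      have hptw : ∀ p, V (x, p) =
          Set.indicator (Set.Ioi (F x)) (fun p => ENNReal.ofReal (h' (clamp (1 - p)))) p := by
        intro p
        simp [hV, Set.indicator_apply, Set.mem_Ioi]
      simp only [hptw]
      rw [lintegral_indicator measurableSet_Ioi, Measure.restrict_restrict measurableSet_Ioi,
        hset2 (F x) (hF0 x)]
      have hcongr : ∀ p ∈ Set.Ioo (F x) 1,
          ENNReal.ofReal (h' (clamp (1 - p))) = ENNReal.ofReal (h' (1 - p)) := by
        intro p hp
        rw [clampeq _ ⟨by linarith [hp.2], by linarith [hF0 x, hp.1]⟩]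
      rw [setLIntegral_congr_fun measurableSet_Ioo hcongr]
      rw [← ofReal_integral_eq_lintegral_ofReal (h'refInt (F x) ⟨hF0 x, hF1 x⟩)
        ((ae_restrict_mem measurableSet_Ioo).mono fun p hp =>
          h'nn (1 - p) ⟨by linarith [hp.2], by linarith [hF0 x, hp.1]⟩)]
      rw [hlayer (F x) ⟨hF0 x, hF1 x⟩]
    have innerB2 : ∀ p ∈ Set.Ioo (0:ℝ) 1,
        ∫⁻ x in Set.Ioi (0:ℝ), V (x, p) = ENNReal.ofReal (Q p * h' (1 - p)) := by
      intro p hp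
      have hptw : ∀ x, V (x, p) =
          Set.indicator {x : ℝ | F x < p} (fun _ => ENNReal.ofReal (h' (clamp (1 - p)))) x := by
        intro x
        simp [hV, Set.indicator_apply]
      simp only [hptw]
      rw [lintegral_indicator (measurableSet_lt hFmeas measurable_const),
        Measure.restrict_restrict (measurableSet_lt hFmeas measurable_const)]
      rw [setLIntegral_const]
      have hseteq : {x : ℝ | F x < p} ∩ Set.Ioi 0 = {x : ℝ | 0 < x ∧ F x < p} := by
        ext x
        simp only [Set.mem_inter_iff, Set.mem_setOf_eq, Set.mem_Ioi]
        exact and_comm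
      rw [hseteq, volQ p hp, clampeq _ ⟨by linarith [hp.2], by linarith [hp.1]⟩]
      rw [← ENNReal.ofReal_mul (h'nn (1 - p) ⟨by linarith [hp.2], by linarith [hp.1]⟩), mul_comm]
    have hswapB := lintegral_lintegral_swap (μ := volume.restrict (Set.Ioi (0:ℝ)))
      (ν := volume.restrict (Set.Ioo (0:ℝ) 1)) (f := fun x p => V (x, p)) hVm
    have Knnae : 0 ≤ᵐ[volume.restrict (Set.Ioo (0:ℝ) 1)] fun t => Q t * h' (1 - t) :=
      (ae_restrict_mem measurableSet_Ioo).mono fun t ht =>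
        mul_nonneg (Qnn t ht.2) (h'nn (1 - t) ⟨by linarith [ht.2], by linarith [ht.1]⟩)
    have Knn : 0 ≤ K := by
      rw [hK]
      exact setIntegral_nonneg measurableSet_Ioo fun t ht =>
        mul_nonneg (Qnn t ht.2) (h'nn (1 - t) ⟨by linarith [ht.2], by linarith [ht.1]⟩)
    rw [integral_eq_lintegral_of_nonneg_ae hnnInt hmeasInt]
    have e1 : ∫⁻ x in Set.Ioi (0:ℝ), ENNReal.ofReal (h (1 - F x))
        = ∫⁻ p in Set.Ioo (0:ℝ) 1, ENNReal.ofReal (Q p * h' (1 - p)) := by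
      rw [← setLIntegral_congr_fun measurableSet_Ioi innerB1,
        ← setLIntegral_congr_fun measurableSet_Ioo innerB2]
      exact hswapB
    rw [e1, ← ofReal_integral_eq_lintegral_ofReal hint Knnae, ← hK, ENNReal.toReal_ofReal Knn]
  have congr1 : ∫ p in Set.Ioo (0:ℝ) 1, (1 - LCE p / μF) * f p
      = ∫ p in Set.Ioo (0:ℝ) 1,
          ((1/c) * (p * h'' (1 - p)) - (1/(c*μF)) * (G p * h'' (1 - p))) := by
    apply setIntegral_congr_fun measurableSet_Ioo
    intro p hp
    have hp0 : (p:ℝ) ≠ 0 := ne_of_gt hp.1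
    have hGp : ∫ t in (0:ℝ)..p, Q t = G p := by
      rw [intervalIntegral.integral_of_le hp.1.le, integral_Ioc_eq_integral_Ioo]
    simp only [hf p hp, hLCE p, hGp, ← hc]
    field_simp
  rw [congr1, integral_sub (key1int.const_mul _) (key2int.const_mul _),
    integral_const_mul, integral_const_mul, key1, key2, keyB]
  field_simp
  ring
end

section
/- Let X be a nonnegative random variable with cdf F, positive finite mean μ_F, and let g be twice differentiable and concave on [0,1] with g(0)=0, g(1)=1, g'(1) ≠ 1. If π_g has density f(t) = −(1−t)·g''(1−t)/(1−g'(1)) on (0,1), then E[UCE_F(π_g)/μ_F − 1] = (1/(1−g'(1)))·((1/μ_F)∫₀^∞ g(1−F(x)) dx − 1). -/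
open MeasureTheory Set
open scoped ENNReal

lemma hasDerivAt_comp_one_sub {φ : ℝ → ℝ} {d p : ℝ} (h : HasDerivAt φ d (1 - p)) :
    HasDerivAt (fun x => φ (1 - x)) (-d) p := by
  have h2 : HasDerivAt (fun x : ℝ => 1 - x) (-1) p := by
    simpa using (hasDerivAt_id' p).const_sub (1:ℝ)
  have h3 := h.comp p h2
  rw [mul_neg_one] at h3
  exact h3

lemma ftc_aux {K K' : ℝ → ℝ} {a b : ℝ} (hab : a ≤ b)
    (hcont : ContinuousOn K (Set.Icc a b))
    (hderiv : ∀ x ∈ Set.Ioo a b, HasDerivAt K (K' x) x)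
    (hpos : ∀ x ∈ Set.Ioo a b, 0 ≤ K' x) :
    IntegrableOn K' (Set.Ioo a b) ∧ ∫ x in Set.Ioo a b, K' x = K b - K a := by
  have h1 : IntegrableOn K' (Set.Ioc a b) :=
    intervalIntegral.integrableOn_deriv_of_nonneg hcont hderiv hpos
  refine ⟨h1.mono_set Set.Ioo_subset_Ioc_self, ?_⟩
  rw [← MeasureTheory.integral_Ioc_eq_integral_Ioo, ← intervalIntegral.integral_of_le hab]
  exact intervalIntegral.integral_eq_sub_of_hasDerivAt_of_le hab hcont hderiv
    ((intervalIntegrable_iff_integrableOn_Ioc_of_le hab).2 h1)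

theorem wang_risk_measure_representation
    (ν : Measure ℝ) [IsProbabilityMeasure ν] (hsupp : ν (Set.Iio 0) = 0)
    (F Q : ℝ → ℝ)
    (hF : ∀ x, F x = (ν (Set.Iic x)).toReal)
    (hQ : ∀ t, Q t = sInf {x : ℝ | 0 ≤ x ∧ t ≤ F x})
    (μF : ℝ) (hμF : μF = ∫ t in Set.Ioo (0:ℝ) 1, Q t) (hμpos : 0 < μF)
    (hQint : IntegrableOn Q (Set.Ioo 0 1) volume)
    (g g' g'' : ℝ → ℝ)
    (hd1 : ∀ t ∈ Set.Icc (0:ℝ) 1, HasDerivAt g (g' t) t)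
    (hd2 : ∀ t ∈ Set.Icc (0:ℝ) 1, HasDerivAt g' (g'' t) t)
    (hconc : ∀ t ∈ Set.Ioo (0:ℝ) 1, g'' t ≤ 0)
    (hmap : ∀ t ∈ Set.Icc (0:ℝ) 1, g t ∈ Set.Icc (0:ℝ) 1)
    (g0 : g 0 = 0) (g1 : g 1 = 1) (gne : g' 1 ≠ 1)
    (f : ℝ → ℝ)
    (hf : ∀ t ∈ Set.Ioo (0:ℝ) 1, f t = -(1 - t) * g'' (1 - t) / (1 - g' 1))
    (UCE : ℝ → ℝ) (hUCE : ∀ p, UCE p = (1 / (1 - p)) * ∫ t in p..(1:ℝ), Q t)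
    (hint : IntegrableOn (fun t => Q t * g' (1 - t)) (Set.Ioo 0 1) volume) :
    ∫ p in Set.Ioo (0:ℝ) 1, (UCE p / μF - 1) * f p
      = (1 / (1 - g' 1)) * ((1 / μF) * (∫ x in Set.Ioi (0:ℝ), g (1 - F x)) - 1) := by
  have hcne : (1:ℝ) - g' 1 ≠ 0 := sub_ne_zero.2 (Ne.symm gne)
  have hμne : μF ≠ 0 := ne_of_gt hμpos
  -- continuity
  have hgc : ContinuousOn g (Set.Icc 0 1) :=
    fun t ht => (hd1 t ht).continuousAt.continuousWithinAt
  have hg'c : ContinuousOn g' (Set.Icc 0 1) :=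
    fun t ht => (hd2 t ht).continuousAt.continuousWithinAt
  obtain ⟨M, hM⟩ : ∃ M, ∀ t ∈ Set.Icc (0:ℝ) 1, ‖g' t‖ ≤ M :=
    isCompact_Icc.exists_bound_of_continuousOn hg'c
  -- F facts
  have hFmono : Monotone F := by
    intro a b hab
    rw [hF, hF]
    exact ENNReal.toReal_mono (measure_ne_top _ _)
      (measure_mono (Set.Iic_subset_Iic.2 hab))
  have hFm : Measurable F := hFmono.measurable
  have hF0 : ∀ x, 0 ≤ F x := fun x => by rw [hF]; exact ENNReal.toReal_nonneg
  have hF1 : ∀ x, F x ≤ 1 := by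
    intro x
    rw [hF]
    have h1 : ν (Set.Iic x) ≤ 1 := prob_le_one
    calc (ν (Set.Iic x)).toReal ≤ (1 : ℝ≥0∞).toReal :=
          ENNReal.toReal_mono (by simp) h1
      _ = 1 := by simp
  -- quantile facts
  have hSne : ∀ t : ℝ, t < 1 → {x : ℝ | 0 ≤ x ∧ t ≤ F x}.Nonempty := by
    intro t ht
    have h1 : Filter.Tendsto (fun x : ℝ => ν (Set.Iic x)) Filter.atTop (nhds (ν Set.univ)) :=
      tendsto_measure_Iic_atTop ν
    have h2 : Filter.Tendsto F Filter.atTop (nhds 1) := by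
      have h3 := (ENNReal.tendsto_toReal (measure_ne_top ν Set.univ)).comp h1
      simp only [Function.comp_def] at h3
      have h5 : (ν Set.univ).toReal = 1 := by simp
      rw [h5] at h3
      exact h3.congr fun x => (hF x).symm
    have h4 : ∀ᶠ x in Filter.atTop, t < F x := h2.eventually (eventually_gt_nhds ht)
    obtain ⟨x, hx⟩ := (h4.and (Filter.eventually_ge_atTop 0)).exists
    exact ⟨x, hx.2, hx.1.le⟩
  have hSbdd : ∀ t : ℝ, BddBelow {x : ℝ | 0 ≤ x ∧ t ≤ F x} :=
    fun t => ⟨0, fun x hx => hx.1⟩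
  have hQnn : ∀ t : ℝ, t < 1 → 0 ≤ Q t := by
    intro t ht
    rw [hQ]
    exact le_csInf (hSne t ht) (fun x hx => hx.1)
  have hvol : ∀ t ∈ Set.Ioo (0:ℝ) 1,
      volume ({x : ℝ | F x < t} ∩ Set.Ioi 0) = ENNReal.ofReal (Q t) := by
    intro t ht
    have hsub1 : Set.Ioo 0 (Q t) ⊆ {x : ℝ | F x < t} ∩ Set.Ioi 0 := by
      intro x hx
      refine ⟨?_, hx.1⟩
      by_contra hcon
      simp only [Set.mem_setOf_eq, not_lt] at hcon
      have hle : Q t ≤ x := by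
        rw [hQ]; exact csInf_le (hSbdd t) ⟨hx.1.le, hcon⟩
      linarith [hx.2]
    have hsub2 : {x : ℝ | F x < t} ∩ Set.Ioi 0 ⊆ Set.Ioc 0 (Q t) := by
      rintro x ⟨hxF, hx0⟩
      simp only [Set.mem_setOf_eq] at hxF
      refine ⟨hx0, ?_⟩
      by_contra hcon
      push_neg at hcon
      rw [hQ] at hcon
      obtain ⟨y, hy, hyx⟩ := exists_lt_of_csInf_lt (hSne t ht.2) hcon
      exact absurd (le_trans hy.2 (hFmono hyx.le)) (not_le.2 hxF)
    have h1 : volume (Set.Ioo 0 (Q t)) ≤ volume ({x : ℝ | F x < t} ∩ Set.Ioi 0) :=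
      measure_mono hsub1
    have h2 : volume ({x : ℝ | F x < t} ∩ Set.Ioi 0) ≤ volume (Set.Ioc 0 (Q t)) :=
      measure_mono hsub2
    rw [Real.volume_Ioo, sub_zero] at h1
    rw [Real.volume_Ioc, sub_zero] at h2
    exact le_antisymm h2 h1
  -- g'' facts
  have hg''eq : ∀ t ∈ Set.Icc (0:ℝ) 1, g'' t = deriv g' t :=
    fun t ht => ((hd2 t ht).deriv).symm
  -- FTC for p ↦ g'(1-p) on [0,t]
  have hftcB : ∀ t ∈ Set.Ioc (0:ℝ) 1,
      IntegrableOn (fun p => -g'' (1 - p)) (Set.Ioo 0 t) ∧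
      ∫ p in Set.Ioo (0:ℝ) t, -g'' (1 - p) = g' (1 - t) - g' 1 := by
    intro t ht
    have hsub : ∀ x ∈ Set.Icc (0:ℝ) t, 1 - x ∈ Set.Icc (0:ℝ) 1 := by
      intro x hx
      simp only [Set.mem_Icc] at hx ⊢
      constructor <;> [linarith [ht.2]; linarith]
    have hsub2 : ∀ x ∈ Set.Ioo (0:ℝ) t, 1 - x ∈ Set.Ioo (0:ℝ) 1 := by
      intro x hx
      simp only [Set.mem_Ioo] at hx ⊢
      constructor <;> [linarith [ht.2]; linarith]
    have h := ftc_aux (K := fun p => g' (1 - p)) (K' := fun p => -g'' (1 - p))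
      ht.1.le
      (hg'c.comp ((continuous_const.sub continuous_id).continuousOn) hsub)
      (fun x hx => hasDerivAt_comp_one_sub
        (hd2 (1 - x) (hsub x (Set.mem_Icc_of_Ioo hx))))
      (fun x hx => by simpa using hconc (1 - x) (hsub2 x hx))
    refine ⟨h.1, ?_⟩
    rw [h.2]; simp
  -- FTC claim C
  have hC : IntegrableOn (fun p => (1 - p) * (-g'' (1 - p))) (Set.Ioo 0 1) ∧
      ∫ p in Set.Ioo (0:ℝ) 1, (1 - p) * (-g'' (1 - p)) = 1 - g' 1 := by
    have hsub : ∀ x ∈ Set.Icc (0:ℝ) 1, 1 - x ∈ Set.Icc (0:ℝ) 1 := by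
      intro x hx; simp only [Set.mem_Icc] at hx ⊢; constructor <;> linarith
    have hcont : ContinuousOn (fun p => (1 - p) * g' (1 - p) - g (1 - p)) (Set.Icc 0 1) := by
      refine ContinuousOn.sub (ContinuousOn.mul ?_ (hg'c.comp ?_ hsub)) (hgc.comp ?_ hsub) <;>
        exact (continuous_const.sub continuous_id).continuousOn
    have hderiv : ∀ p ∈ Set.Ioo (0:ℝ) 1,
        HasDerivAt (fun p => (1 - p) * g' (1 - p) - g (1 - p)) ((1 - p) * (-g'' (1 - p))) p := by
      intro p hp
      have hmem : 1 - p ∈ Set.Icc (0:ℝ) 1 := hsub p (Set.mem_Icc_of_Ioo hp)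
      have d1 : HasDerivAt (fun x => g' (1 - x)) (-g'' (1 - p)) p :=
        hasDerivAt_comp_one_sub (hd2 _ hmem)
      have d2 : HasDerivAt (fun x => g (1 - x)) (-g' (1 - p)) p :=
        hasDerivAt_comp_one_sub (hd1 _ hmem)
      have d3 : HasDerivAt (fun x : ℝ => 1 - x) (-1) p := by
        simpa using (hasDerivAt_id' p).const_sub (1:ℝ)
      have d4 := (d3.mul d1).sub d2
      refine d4.congr_deriv ?_
      ring
    have hpos : ∀ p ∈ Set.Ioo (0:ℝ) 1, 0 ≤ (1 - p) * (-g'' (1 - p)) := by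
      intro p hp
      simp only [Set.mem_Ioo] at hp
      have h1 : 1 - p ∈ Set.Ioo (0:ℝ) 1 := by
        simp only [Set.mem_Ioo]; constructor <;> linarith
      have := hconc _ h1
      nlinarith
    have h := ftc_aux zero_le_one hcont hderiv hpos
    refine ⟨h.1, ?_⟩
    rw [h.2]
    norm_num [g0, g1]
  -- the key Fubini identities
  have hg'1c : ContinuousOn (fun t : ℝ => g' (1 - t)) (Set.Icc 0 1) := by
    refine hg'c.comp ((continuous_const.sub continuous_id).continuousOn) ?_
    intro x hx; simp only [Set.mem_Icc] at hx ⊢; constructor <;> linarith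
  have keyA : ∫ x in Set.Ioi (0:ℝ), g (1 - F x)
      = ∫ t in Set.Ioo (0:ℝ) 1, g' (1 - t) * Q t := by
    classical
    set μ1 := volume.restrict (Set.Ioi (0:ℝ)) with hμ1
    set μ2 := volume.restrict (Set.Ioo (0:ℝ) 1) with hμ2
    set S : Set (ℝ × ℝ) := {z : ℝ × ℝ | F z.1 < z.2} with hS
    have hSm : MeasurableSet S := measurableSet_lt (hFm.comp measurable_fst) measurable_snd
    set h : ℝ × ℝ → ℝ := S.indicator (fun z => g' (1 - z.2)) with hh
    have hmeas : AEStronglyMeasurable h (μ1.prod μ2) := by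
      refine AEStronglyMeasurable.indicator ?_ hSm
      exact ((hg'1c.mono Set.Ioo_subset_Icc_self).aestronglyMeasurable measurableSet_Ioo).comp_snd
    have hμ1app : ∀ t ∈ Set.Ioo (0:ℝ) 1, μ1 {x | F x < t} = ENNReal.ofReal (Q t) := by
      intro t ht
      have hsm : MeasurableSet {x : ℝ | F x < t} := hFm measurableSet_Iio
      rw [hμ1, Measure.restrict_apply hsm]
      exact hvol t ht
    have hcond1 : ∀ᵐ t ∂μ2, Integrable (fun x => h (x, t)) μ1 := by
      filter_upwards [ae_restrict_mem measurableSet_Ioo] with t ht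
      have hsm : MeasurableSet {x : ℝ | F x < t} := hFm measurableSet_Iio
      have hslice : (fun x => h (x, t)) = Set.indicator {x | F x < t} (fun _ => g' (1 - t)) := by
        funext x
        simp [hh, hS, Set.indicator_apply, Set.mem_setOf_eq]
      rw [hslice, integrable_indicator_iff hsm]
      refine integrableOn_const (ne_of_lt ?_)
      calc μ1 {x | F x < t} = ENNReal.ofReal (Q t) := hμ1app t ht
        _ < ⊤ := ENNReal.ofReal_lt_top
    have hslicecalc : ∀ t ∈ Set.Ioo (0:ℝ) 1,
        (∫ x, h (x, t) ∂μ1) = g' (1 - t) * Q t := by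
      intro t ht
      have hsm : MeasurableSet {x : ℝ | F x < t} := hFm measurableSet_Iio
      have hslice : (fun x => h (x, t)) = Set.indicator {x | F x < t} (fun _ => g' (1 - t)) := by
        funext x
        simp [hh, hS, Set.indicator_apply, Set.mem_setOf_eq]
      rw [hslice, integral_indicator hsm, setIntegral_const, measureReal_def, hμ1app t ht,
        ENNReal.toReal_ofReal (hQnn t ht.2), smul_eq_mul, mul_comm]
    have hcond2 : Integrable (fun t => ∫ x, ‖h (x, t)‖ ∂μ1) μ2 := by
      have hMnn : (0:ℝ) ≤ M := le_trans (norm_nonneg _) (hM 0 (by norm_num))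
      have hbig : Integrable (fun t => ‖g' (1 - t)‖ * Q t) μ2 := by
        refine Integrable.mono (hQint.const_mul M) ?_ ?_
        · exact ((hg'1c.mono Set.Ioo_subset_Icc_self).norm.aestronglyMeasurable
            measurableSet_Ioo).mul hQint.1
        · filter_upwards [ae_restrict_mem measurableSet_Ioo] with t ht
          have h1t : 1 - t ∈ Set.Icc (0:ℝ) 1 := by
            simp only [Set.mem_Ioo] at ht; simp only [Set.mem_Icc]; constructor <;> linarith
          have hq := hQnn t ht.2
          have hMt := hM (1 - t) h1t
          rw [Real.norm_eq_abs, Real.norm_eq_abs, abs_of_nonneg (by positivity)]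
          calc ‖g' (1-t)‖ * Q t ≤ M * Q t := mul_le_mul_of_nonneg_right hMt hq
            _ ≤ |M * Q t| := le_abs_self _
      refine hbig.congr ?_
      filter_upwards [ae_restrict_mem measurableSet_Ioo] with t ht
      have hsm : MeasurableSet {x : ℝ | F x < t} := hFm measurableSet_Iio
      have hslice : (fun x => ‖h (x, t)‖) = Set.indicator {x | F x < t} (fun _ => ‖g' (1 - t)‖) := by
        funext x
        rw [hh, norm_indicator_eq_indicator_norm]
        simp [hS, Set.indicator_apply, Set.mem_setOf_eq]
      have hcalc : (∫ x, ‖h (x, t)‖ ∂μ1) = ‖g' (1 - t)‖ * Q t := by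
        rw [hslice, integral_indicator hsm, setIntegral_const, measureReal_def, hμ1app t ht,
          ENNReal.toReal_ofReal (hQnn t ht.2), smul_eq_mul, mul_comm]
      exact hcalc.symm
    have hIntProd : Integrable h (μ1.prod μ2) := (integrable_prod_iff' hmeas).2 ⟨hcond1, hcond2⟩
    have inner1 : ∀ x : ℝ, (∫ t, h (x, t) ∂μ2) = g (1 - F x) := by
      intro x
      have hslice : (fun t => h (x, t)) = Set.indicator (Set.Ioi (F x)) (fun t => g' (1 - t)) := by
        funext t
        simp [hh, hS, Set.indicator_apply, Set.mem_setOf_eq, Set.mem_Ioi]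
      rw [hslice, integral_indicator measurableSet_Ioi, hμ2,
        Measure.restrict_restrict measurableSet_Ioi]
      have hinter : Set.Ioi (F x) ∩ Set.Ioo 0 1 = Set.Ioo (F x) 1 := by
        ext s
        simp only [Set.mem_inter_iff, Set.mem_Ioi, Set.mem_Ioo]
        constructor
        · rintro ⟨h1, _, h3⟩; exact ⟨h1, h3⟩
        · rintro ⟨h1, h2⟩; exact ⟨h1, lt_of_le_of_lt (hF0 x) h1, h2⟩
      rw [hinter, ← MeasureTheory.integral_Ioc_eq_integral_Ioo,
        ← intervalIntegral.integral_of_le (hF1 x)]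
      have hmaps : ∀ u ∈ Set.Icc (F x) 1, 1 - u ∈ Set.Icc (0:ℝ) 1 := by
        intro u hu; simp only [Set.mem_Icc] at hu ⊢
        constructor
        · linarith [hu.2]
        · linarith [hF0 x, hu.1]
      have hKc : ContinuousOn (fun u => -g (1 - u)) (Set.Icc (F x) 1) :=
        ((hgc.comp ((continuous_const.sub continuous_id).continuousOn) hmaps)).neg
      have hK : ∀ s ∈ Set.Ioo (F x) 1, HasDerivAt (fun u => -g (1 - u)) (g' (1 - s)) s := by
        intro s hs
        have := (hasDerivAt_comp_one_sub (hd1 (1 - s) (hmaps s (Set.mem_Icc_of_Ioo hs)))).neg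
        rw [neg_neg] at this
        exact this
      have hIc : IntervalIntegrable (fun s => g' (1 - s)) volume (F x) 1 := by
        apply ContinuousOn.intervalIntegrable
        rw [Set.uIcc_of_le (hF1 x)]
        exact hg'c.comp ((continuous_const.sub continuous_id).continuousOn) hmaps
      rw [intervalIntegral.integral_eq_sub_of_hasDerivAt_of_le (hF1 x) hKc hK hIc]
      simp [g0]
    have inner2 : ∀ᵐ t ∂μ2, (∫ x, h (x, t) ∂μ1) = g' (1 - t) * Q t := by
      filter_upwards [ae_restrict_mem measurableSet_Ioo] with t ht
      exact hslicecalc t ht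
    calc ∫ x in Set.Ioi (0:ℝ), g (1 - F x) = ∫ x, (∫ t, h (x, t) ∂μ2) ∂μ1 :=
          (integral_congr_ae (Filter.Eventually.of_forall inner1)).symm
      _ = ∫ z, h z ∂(μ1.prod μ2) := (integral_prod h hIntProd).symm
      _ = ∫ t, (∫ x, h (x, t) ∂μ1) ∂μ2 := integral_prod_symm h hIntProd
      _ = ∫ t in Set.Ioo (0:ℝ) 1, g' (1 - t) * Q t := integral_congr_ae inner2
  have keyB : (IntegrableOn (fun p => (-g'' (1 - p)) * ∫ t in Set.Ioo p 1, Q t) (Set.Ioo 0 1)) ∧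
      (∫ p in Set.Ioo (0:ℝ) 1, (-g'' (1 - p)) * ∫ t in Set.Ioo p 1, Q t)
        = ∫ t in Set.Ioo (0:ℝ) 1, Q t * (g' (1 - t) - g' 1) := by
    classical
    set μ2 := volume.restrict (Set.Ioo (0:ℝ) 1) with hμ2
    set S : Set (ℝ × ℝ) := {z : ℝ × ℝ | z.1 < z.2} with hS
    have hSm : MeasurableSet S := measurableSet_lt measurable_fst measurable_snd
    set k : ℝ × ℝ → ℝ := S.indicator (fun z => (-g'' (1 - z.1)) * Q z.2) with hk
    have hg''m : AEStronglyMeasurable (fun p => -g'' (1 - p)) μ2 := by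
      have hm : Measurable (fun p : ℝ => -deriv g' (1 - p)) :=
        ((measurable_deriv g').comp (measurable_const.sub measurable_id)).neg
      refine hm.aestronglyMeasurable.congr ?_
      filter_upwards [ae_restrict_mem measurableSet_Ioo] with p hp
      have hmem : 1 - p ∈ Set.Icc (0:ℝ) 1 := by
        simp only [Set.mem_Ioo] at hp; simp only [Set.mem_Icc]; constructor <;> linarith
      rw [hg''eq (1 - p) hmem]
    have hmeas : AEStronglyMeasurable k (μ2.prod μ2) :=
      (hg''m.comp_fst.mul hQint.1.comp_snd).indicator hSm
    have hIoi : ∀ p ∈ Set.Ioo (0:ℝ) 1, Set.Ioi p ∩ Set.Ioo 0 1 = Set.Ioo p 1 := by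
      intro p hp
      ext s
      simp only [Set.mem_inter_iff, Set.mem_Ioi, Set.mem_Ioo]
      constructor
      · rintro ⟨h1, _, h3⟩; exact ⟨h1, h3⟩
      · rintro ⟨h1, h2⟩; exact ⟨h1, lt_trans hp.1 h1, h2⟩
    have hIio : ∀ t ∈ Set.Ioo (0:ℝ) 1, Set.Iio t ∩ Set.Ioo 0 1 = Set.Ioo 0 t := by
      intro t ht
      ext s
      simp only [Set.mem_inter_iff, Set.mem_Iio, Set.mem_Ioo]
      constructor
      · rintro ⟨h1, h2, _⟩; exact ⟨h2, h1⟩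
      · rintro ⟨h1, h2⟩; exact ⟨h2, h1, lt_trans h2 ht.2⟩
    have hnegB := hftcB 1 (by norm_num)
    have hcond1 : ∀ᵐ p ∂μ2, Integrable (fun t => k (p, t)) μ2 := by
      filter_upwards [ae_restrict_mem measurableSet_Ioo] with p hp
      have hslice : (fun t => k (p, t))
          = Set.indicator (Set.Ioi p) (fun t => (-g'' (1 - p)) * Q t) := by
        funext t
        simp [hk, hS, Set.indicator_apply, Set.mem_setOf_eq, Set.mem_Ioi]
      rw [hslice, integrable_indicator_iff measurableSet_Ioi]
      exact (hQint.const_mul _).integrableOn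
    have hcond2 : Integrable (fun p => ∫ t, ‖k (p, t)‖ ∂μ2) μ2 := by
      set W : ℝ → ℝ :=
        fun p => ∫ t in Set.Ioo (0:ℝ) 1, Set.indicator (Set.Ioi p) (fun t => ‖Q t‖) t with hW
      have hQn : IntegrableOn (fun t => ‖Q t‖) (Set.Ioo (0:ℝ) 1) := hQint.norm
      have hWanti : Antitone W := by
        intro a b hab
        refine integral_mono_of_nonneg ?_ (hQn.indicator measurableSet_Ioi) ?_
        · filter_upwards with t
          exact Set.indicator_nonneg (fun s _ => norm_nonneg _) t
        · filter_upwards with t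
          exact Set.indicator_le_indicator_of_subset (Set.Ioi_subset_Ioi hab)
            (fun s => norm_nonneg _) t
      have hWm : Measurable W := hWanti.measurable
      have hWnn : ∀ p, 0 ≤ W p :=
        fun p => integral_nonneg (fun t => Set.indicator_nonneg (fun s _ => norm_nonneg _) t)
      set CQ : ℝ := ∫ t in Set.Ioo (0:ℝ) 1, ‖Q t‖ with hCQ
      have hWle : ∀ p, W p ≤ CQ := by
        intro p
        refine integral_mono_of_nonneg ?_ hQn ?_
        · filter_upwards with t
          exact Set.indicator_nonneg (fun s _ => norm_nonneg _) t
        · filter_upwards with t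
          exact Set.indicator_le_self' (fun s _ => norm_nonneg _) t
      have hbig : Integrable (fun p => (-g'' (1 - p)) * W p) μ2 := by
        refine Integrable.mono (hnegB.1.const_mul CQ) (hg''m.mul hWm.aestronglyMeasurable) ?_
        filter_upwards [ae_restrict_mem measurableSet_Ioo] with p hp
        have hmem : 1 - p ∈ Set.Ioo (0:ℝ) 1 := by
          simp only [Set.mem_Ioo] at hp; simp only [Set.mem_Ioo]; constructor <;> linarith
        have hng : 0 ≤ -g'' (1 - p) := by simpa using hconc _ hmem
        rw [Real.norm_eq_abs, Real.norm_eq_abs, abs_of_nonneg (mul_nonneg hng (hWnn p))]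
        calc (-g'' (1 - p)) * W p ≤ (-g'' (1 - p)) * CQ := by
              exact mul_le_mul_of_nonneg_left (hWle p) hng
          _ = CQ * (-g'' (1 - p)) := by ring
          _ ≤ |CQ * (-g'' (1 - p))| := le_abs_self _
      refine hbig.congr ?_
      filter_upwards [ae_restrict_mem measurableSet_Ioo] with p hp
      have hmem : 1 - p ∈ Set.Ioo (0:ℝ) 1 := by
        simp only [Set.mem_Ioo] at hp; simp only [Set.mem_Ioo]; constructor <;> linarith
      have hng : 0 ≤ -g'' (1 - p) := by simpa using hconc _ hmem
      have hslice : (fun t => ‖k (p, t)‖)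
          = Set.indicator (Set.Ioi p) (fun t => (-g'' (1 - p)) * ‖Q t‖) := by
        funext t
        rw [hk, norm_indicator_eq_indicator_norm]
        simp only [hS, Set.indicator_apply, Set.mem_setOf_eq, Set.mem_Ioi]
        congr 1
        rw [norm_mul, Real.norm_eq_abs, abs_of_nonneg hng, Real.norm_eq_abs]
      have hcalc : (∫ t, ‖k (p, t)‖ ∂μ2) = (-g'' (1 - p)) * W p := by
        rw [hslice]
        have hind : (Set.indicator (Set.Ioi p) fun t => -g'' (1 - p) * ‖Q t‖)
            = fun t => (-g'' (1 - p)) * Set.indicator (Set.Ioi p) (fun t => ‖Q t‖) t := by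
          funext t
          simp only [Set.indicator_apply]
          split <;> simp
        rw [hind, MeasureTheory.integral_const_mul, hW]
      exact hcalc.symm
    have hIntProd : Integrable k (μ2.prod μ2) := (integrable_prod_iff hmeas).2 ⟨hcond1, hcond2⟩
    have innerL : ∀ᵐ p ∂μ2, (∫ t, k (p, t) ∂μ2)
        = (-g'' (1 - p)) * ∫ t in Set.Ioo p 1, Q t := by
      filter_upwards [ae_restrict_mem measurableSet_Ioo] with p hp
      have hslice : (fun t => k (p, t))
          = Set.indicator (Set.Ioi p) (fun t => (-g'' (1 - p)) * Q t) := by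
        funext t
        simp [hk, hS, Set.indicator_apply, Set.mem_setOf_eq, Set.mem_Ioi]
      rw [hslice, integral_indicator measurableSet_Ioi, hμ2,
        Measure.restrict_restrict measurableSet_Ioi, hIoi p hp,
        MeasureTheory.integral_const_mul]
    have innerR : ∀ᵐ t ∂μ2, (∫ p, k (p, t) ∂μ2)
        = Q t * (g' (1 - t) - g' 1) := by
      filter_upwards [ae_restrict_mem measurableSet_Ioo] with t ht
      have hslice : (fun p => k (p, t))
          = Set.indicator (Set.Iio t) (fun p => (-g'' (1 - p)) * Q t) := by
        funext p
        simp [hk, hS, Set.indicator_apply, Set.mem_setOf_eq, Set.mem_Iio]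
      rw [hslice, integral_indicator measurableSet_Iio, hμ2,
        Measure.restrict_restrict measurableSet_Iio, hIio t ht,
        MeasureTheory.integral_mul_const, (hftcB t ⟨ht.1, ht.2.le⟩).2, mul_comm]
    constructor
    · exact (hIntProd.integral_prod_left).congr innerL
    · calc (∫ p in Set.Ioo (0:ℝ) 1, (-g'' (1 - p)) * ∫ t in Set.Ioo p 1, Q t)
          = ∫ p, (∫ t, k (p, t) ∂μ2) ∂μ2 := (integral_congr_ae innerL).symm
        _ = ∫ z, k z ∂(μ2.prod μ2) := (integral_prod k hIntProd).symm
        _ = ∫ t, (∫ p, k (p, t) ∂μ2) ∂μ2 := integral_prod_symm k hIntProd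
        _ = ∫ t in Set.Ioo (0:ℝ) 1, Q t * (g' (1 - t) - g' 1) := integral_congr_ae innerR
  -- split the RHS of keyB
  have hsplit : ∫ t in Set.Ioo (0:ℝ) 1, Q t * (g' (1 - t) - g' 1)
      = (∫ t in Set.Ioo (0:ℝ) 1, Q t * g' (1 - t)) - g' 1 * μF := by
    have h1 : (fun t => Q t * (g' (1 - t) - g' 1))
        = fun t => Q t * g' (1 - t) - g' 1 * Q t := by funext t; ring
    rw [h1, integral_sub hint (hQint.const_mul (g' 1)), MeasureTheory.integral_const_mul, hμF]
  -- rewrite the integrand on (0,1)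
  have hrw : ∀ p ∈ Set.Ioo (0:ℝ) 1,
      (UCE p / μF - 1) * f p
        = (1 / (μF * (1 - g' 1))) * ((-g'' (1 - p)) * ∫ t in Set.Ioo p 1, Q t)
          - (1 / (1 - g' 1)) * ((1 - p) * (-g'' (1 - p))) := by
    intro p hp
    have h1p : (1:ℝ) - p ≠ 0 := by simp at hp; intro h; nlinarith [hp.2]
    have hiv : ∫ t in p..(1:ℝ), Q t = ∫ t in Set.Ioo p 1, Q t := by
      rw [intervalIntegral.integral_of_le (by simp at hp; linarith [hp.2]),
        MeasureTheory.integral_Ioc_eq_integral_Ioo]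
    rw [hUCE, hf p hp, hiv]
    field_simp
    ring
  -- combine
  rw [MeasureTheory.setIntegral_congr_fun measurableSet_Ioo hrw]
  rw [MeasureTheory.integral_sub ((keyB.1.const_mul _)) (hC.1.const_mul _)]
  rw [MeasureTheory.integral_const_mul, MeasureTheory.integral_const_mul]
  have hcomm : (∫ t in Set.Ioo (0:ℝ) 1, Q t * g' (1 - t))
      = ∫ t in Set.Ioo (0:ℝ) 1, g' (1 - t) * Q t := by simp_rw [mul_comm]
  rw [keyB.2, hsplit, hcomm, hC.2, keyA]
  field_simp
  ring
end

section
/- For α > 1 and a nonnegative random variable X with cdf F, positive finite mean μ_F, and quantile function F^{-1}, the Donaldson–Weymark–Kakwani index satisfies α(α−1)∫₀¹ (1−p)^{α−2}(p − L_F(p)) dp = 1 − (α/μ_F)∫₀¹ F^{-1}(t)(1−t)^{α−1} dt = 1 − (1/μ_F)∫₀^∞ (1−F(x))^α dx. -/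
open MeasureTheory

open Set ENNReal Filter in
private lemma dwk_refl_lintegral (f : ℝ → ℝ≥0∞) :
    ∫⁻ s in Set.Ioo (0:ℝ) 1, f (1 - s) = ∫⁻ s in Set.Ioo (0:ℝ) 1, f s := by
  have hmap : (volume.restrict (Set.Ioo (0:ℝ) 1)).map (fun s => 1 - s)
      = volume.restrict (Set.Ioo (0:ℝ) 1) := by
    have hpre : (fun s : ℝ => 1 - s) ⁻¹' (Set.Ioo 0 1) = Set.Ioo 0 1 := by
      ext x; simp only [Set.mem_preimage, Set.mem_Ioo]; constructor <;> intro h <;>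
        constructor <;> linarith [h.1, h.2]
    have h := Measure.restrict_map (μ := (volume : Measure ℝ))
      (f := fun s : ℝ => 1 - s) (s := Set.Ioo 0 1)
      (measurable_const.sub measurable_id) measurableSet_Ioo
    rw [Measure.map_sub_left_eq_self volume 1] at h
    rw [hpre] at h
    exact h.symm
  have hemb : MeasurableEmbedding (fun s : ℝ => 1 - s) :=
    (MeasurableEquiv.subLeft (1:ℝ)).measurableEmbedding
  calc ∫⁻ s in Set.Ioo (0:ℝ) 1, f (1 - s)
      = ∫⁻ s, f s ∂((volume.restrict (Set.Ioo (0:ℝ) 1)).map (fun s => 1 - s)) :=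
        (hemb.lintegral_map f).symm
    _ = ∫⁻ s in Set.Ioo (0:ℝ) 1, f s := by rw [hmap]

open Set ENNReal Filter intervalIntegral in
private lemma dwk_rpow_ftc {β c : ℝ} (hβ : 0 < β) :
    ∫ s in (0:ℝ)..c, β * s ^ (β - 1) = c ^ β := by
  rw [intervalIntegral.integral_const_mul, integral_rpow (Or.inl (by linarith)),
    show β - 1 + 1 = β by ring, Real.zero_rpow (ne_of_gt hβ)]
  field_simp
  simp

open Set ENNReal Filter intervalIntegral in
private lemma dwk_ii_one_sub {r : ℝ} (hr : -1 < r) :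
    IntervalIntegrable (fun p : ℝ => (1 - p) ^ r) volume 0 1 := by
  have h := (intervalIntegrable_rpow' (a := 0) (b := 1) hr).comp_sub_left 1
  simpa using h.symm

open Set ENNReal Filter intervalIntegral in
private lemma dwk_c3 {α : ℝ} (hα : 1 < α) :
    ∫ p in (0:ℝ)..1, (1 - p) ^ (α - 2) * p = 1 / ((α - 1) * α) := by
  have h1 : (∫ p in (0:ℝ)..1, (1 - p) ^ (α - 2) * p)
      = ∫ u in (0:ℝ)..1, u ^ (α - 2) * (1 - u) := by
    have := intervalIntegral.integral_comp_sub_left (a := 0) (b := 1)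
      (fun u : ℝ => u ^ (α - 2) * (1 - u)) 1
    simpa using this
  rw [h1]
  have h2 : (∫ u in (0:ℝ)..1, u ^ (α - 2) * (1 - u))
      = ∫ u in (0:ℝ)..1, (u ^ (α - 2) - u ^ (α - 1)) := by
    apply intervalIntegral.integral_congr_ae
    have h0 : ∀ᵐ (x : ℝ) ∂volume, x ≠ 0 := by
      rw [ae_iff]; simpa using volume_singleton (a := (0:ℝ))
    filter_upwards [h0] with u hu _
    have huu : u ^ (α - 1) = u ^ (α - 2) * u := by
      rw [show α - 1 = (α - 2) + 1 by ring, Real.rpow_add_one hu]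
    rw [mul_sub, mul_one, ← huu]
  rw [h2, intervalIntegral.integral_sub (intervalIntegrable_rpow' (by linarith))
    (intervalIntegrable_rpow' (by linarith)),
    integral_rpow (Or.inl (by linarith)), integral_rpow (Or.inl (by linarith)),
    show α - 2 + 1 = α - 1 by ring, show α - 1 + 1 = α by ring,
    Real.one_rpow, Real.zero_rpow (by intro h; linarith : α - 1 ≠ 0),
    Real.zero_rpow (by intro h; linarith : α ≠ 0)]
  have h3 : α - 1 ≠ 0 := by intro h; linarith
  have h4 : α ≠ 0 := by intro h; linarith
  field_simp
  simp only [sub_zero, Real.one_rpow, mul_one]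
  ring

open Set ENNReal Filter Topology in
theorem dwk_index_alternative_expressions
    (ν : Measure ℝ) [IsProbabilityMeasure ν] (hsupp : ν (Set.Iio 0) = 0)
    (F Q : ℝ → ℝ)
    (hF : ∀ x, F x = (ν (Set.Iic x)).toReal)
    (hQ : ∀ t, Q t = sInf {x : ℝ | 0 ≤ x ∧ t ≤ F x})
    (μF : ℝ) (hμF : μF = ∫ t in Set.Ioo (0:ℝ) 1, Q t) (hμpos : 0 < μF)
    (hQint : IntegrableOn Q (Set.Ioo 0 1) volume)
    (L : ℝ → ℝ) (hL : ∀ p, L p = (∫ t in (0:ℝ)..p, Q t) / μF)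
    (α : ℝ) (hα : 1 < α) :
    α * (α - 1) * ∫ p in (0:ℝ)..1, (1 - p) ^ (α - 2) * (p - L p)
        = 1 - (α / μF) * ∫ t in (0:ℝ)..1, Q t * (1 - t) ^ (α - 1)
      ∧ 1 - (α / μF) * ∫ t in (0:ℝ)..1, Q t * (1 - t) ^ (α - 1)
        = 1 - (1 / μF) * ∫ x in Set.Ioi (0:ℝ), (1 - F x) ^ α := by
  have hα0 : (0:ℝ) < α := by linarith
  have hα1 : (0:ℝ) < α - 1 := by linarith
  have hμne : μF ≠ 0 := ne_of_gt hμpos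
  -- basic facts about F
  have hFmono : Monotone F := by
    intro a b hab
    rw [hF, hF]
    exact ENNReal.toReal_mono (measure_ne_top ν _)
      (measure_mono (Set.Iic_subset_Iic.mpr hab))
  have hFmble : Measurable F := hFmono.measurable
  have hF0 : ∀ x, 0 ≤ F x := fun x => by rw [hF]; exact ENNReal.toReal_nonneg
  have hF1 : ∀ x, F x ≤ 1 := by
    intro x
    rw [hF]
    exact ENNReal.toReal_le_of_le_ofReal zero_le_one (by simpa using prob_le_one)
  -- basic facts about Q
  have hQ0 : ∀ t, 0 ≤ Q t := fun t => by
    rw [hQ]; exact Real.sInf_nonneg (fun x hx => hx.1)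
  have hSne : ∀ t : ℝ, t < 1 → {x : ℝ | 0 ≤ x ∧ t ≤ F x}.Nonempty := by
    have htend : Tendsto F atTop (𝓝 1) := by
      have h := tendsto_measure_Iic_atTop (μ := ν)
      rw [measure_univ] at h
      have h2 := (ENNReal.tendsto_toReal (by simp : (1:ℝ≥0∞) ≠ ⊤)).comp h
      simp only [ENNReal.toReal_one, Function.comp] at h2
      have : F = fun x => (ν (Set.Iic x)).toReal := funext hF
      rw [this]
      exact h2
    intro t ht
    obtain ⟨x, hx1, hx2⟩ := ((htend.eventually_const_le ht).and (eventually_ge_atTop 0)).exists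
    exact ⟨x, hx2, hx1⟩
  -- measure of level sets
  have hlevel : ∀ u : ℝ, 0 < u → u < 1 →
      volume ({x : ℝ | F x < u} ∩ Set.Ioi 0) = ENNReal.ofReal (Q u) := by
    intro u hu0 hu1
    have hQdef := hQ u
    have hupper : {x : ℝ | F x < u} ∩ Set.Ioi 0 ⊆ Set.Ioc 0 (Q u) := by
      rintro x ⟨hx1, hx2⟩
      refine ⟨hx2, ?_⟩
      by_contra h
      push_neg at h
      rw [hQdef] at h
      obtain ⟨y, hy, hyx⟩ := exists_lt_of_csInf_lt (hSne u hu1) h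
      exact absurd (le_trans hy.2 (hFmono hyx.le)) (not_le.mpr hx1)
    have hlower : Set.Ioo 0 (Q u) ⊆ {x : ℝ | F x < u} ∩ Set.Ioi 0 := by
      rintro x ⟨hx1, hx2⟩
      refine ⟨?_, hx1⟩
      by_contra h
      simp only [Set.mem_setOf_eq, not_lt] at h
      have hxin : Q u ≤ x := by
        rw [hQdef]
        exact csInf_le ⟨0, fun y hy => hy.1⟩ ⟨hx1.le, h⟩
      exact absurd hx2 (not_lt.mpr hxin)
    apply le_antisymm
    · calc volume ({x : ℝ | F x < u} ∩ Set.Ioi 0) ≤ volume (Set.Ioc 0 (Q u)) :=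
            measure_mono hupper
        _ = ENNReal.ofReal (Q u) := by rw [Real.volume_Ioc, sub_zero]
    · calc ENNReal.ofReal (Q u) = volume (Set.Ioo 0 (Q u)) := by
            rw [Real.volume_Ioo, sub_zero]
        _ ≤ volume ({x : ℝ | F x < u} ∩ Set.Ioi 0) := measure_mono hlower
  -- facts about L
  have hQsub : ∀ c ∈ Set.Icc (0:ℝ) 1, IntegrableOn Q (Set.Ioo 0 c) volume :=
    fun c hc => hQint.mono_set (Set.Ioo_subset_Ioo le_rfl hc.2)
  have hLval : ∀ c ∈ Set.Icc (0:ℝ) 1, μF * L c = ∫ t in Set.Ioo (0:ℝ) c, Q t := by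
    intro c hc
    have h : (∫ t in (0:ℝ)..c, Q t) = ∫ t in Set.Ioo (0:ℝ) c, Q t := by
      rw [intervalIntegral.integral_of_le hc.1, integral_Ioc_eq_integral_Ioo]
    rw [hL, ← h]
    field_simp
  have hL0 : ∀ c ∈ Set.Icc (0:ℝ) 1, 0 ≤ L c := by
    intro c hc
    rw [hL]
    exact div_nonneg (intervalIntegral.integral_nonneg hc.1 (fun t _ => hQ0 t)) hμpos.le
  have hL1 : ∀ c ∈ Set.Icc (0:ℝ) 1, L c ≤ 1 := by
    intro c hc
    rw [hL, div_le_one hμpos]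
    have h : (∫ t in (0:ℝ)..c, Q t) = ∫ t in Set.Ioo (0:ℝ) c, Q t := by
      rw [intervalIntegral.integral_of_le hc.1, integral_Ioc_eq_integral_Ioo]
    rw [h, hμF]
    apply setIntegral_mono_set hQint
    · exact (ae_restrict_mem measurableSet_Ioo).mono fun t ht => hQ0 t
    · exact HasSubset.Subset.eventuallyLE (Set.Ioo_subset_Ioo le_rfl hc.2)
  have hLcont : ContinuousOn L (Set.Icc 0 1) := by
    have hQicc : IntegrableOn Q (Set.uIcc (0:ℝ) 1) volume := by
      rw [Set.uIcc_of_le zero_le_one]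
      exact (integrableOn_Icc_iff_integrableOn_Ioo).mpr hQint
    have hcont0 : ContinuousOn (fun p => ∫ t in (0:ℝ)..p, Q t) (Set.uIcc 0 1) :=
      intervalIntegral.continuousOn_primitive_interval hQicc
    have hLfun : L = fun p => (∫ t in (0:ℝ)..p, Q t) * μF⁻¹ := by
      funext p; rw [hL]; ring
    rw [hLfun, ← Set.uIcc_of_le (zero_le_one (α := ℝ))]
    exact hcont0.mul continuousOn_const
  -- continuity facts
  have hcont1 : Continuous (fun t : ℝ => (1 - t) ^ (α - 1)) := by
    have h : Continuous (fun x : ℝ => x ^ (α - 1)) :=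
      continuous_iff_continuousAt.mpr
        (fun x => Real.continuousAt_rpow_const x _ (Or.inr (by linarith)))
    exact h.comp (continuous_const.sub continuous_id)
  have hcont2 : ContinuousOn (fun p : ℝ => (1 - p) ^ (α - 2)) (Set.Ioo 0 1) := by
    intro p hp
    have h1 : (1 : ℝ) - p ≠ 0 := sub_ne_zero.mpr (by intro h; rw [← h] at hp; exact absurd hp.2 (lt_irrefl _))
    exact ((Real.continuousAt_rpow_const (1 - p) (α - 2) (Or.inl h1)).comp
      ((continuous_const.sub continuous_id).continuousAt)).continuousWithinAt
  -- key integrands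
  have hJint : IntegrableOn (fun t => Q t * (1 - t) ^ (α - 1)) (Set.Ioo 0 1) volume := by
    apply Integrable.mono' hQint
      (hQint.aestronglyMeasurable.mul (hcont1.aestronglyMeasurable.restrict))
    filter_upwards [ae_restrict_mem measurableSet_Ioo] with t ht
    have h1 : (0:ℝ) ≤ 1 - t := by linarith [ht.2]
    simp only [Pi.mul_apply, id_eq]
    rw [Real.norm_eq_abs, abs_mul, abs_of_nonneg (hQ0 t), abs_of_nonneg (Real.rpow_nonneg h1 _)]
    calc Q t * (1 - t) ^ (α - 1) ≤ Q t * 1 := by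
          apply mul_le_mul_of_nonneg_left _ (hQ0 t)
          exact Real.rpow_le_one h1 (by linarith [ht.1]) hα1.le
      _ = Q t := mul_one _
  have hJnn : 0 ≤ ∫ t in Set.Ioo (0:ℝ) 1, Q t * (1 - t) ^ (α - 1) := by
    apply setIntegral_nonneg measurableSet_Ioo
    intro t ht
    exact mul_nonneg (hQ0 t) (Real.rpow_nonneg (by linarith [ht.2]) _)
  have hgint : IntegrableOn (fun p : ℝ => (1 - p) ^ (α - 2)) (Set.Ioo 0 1) volume :=
    ((dwk_ii_one_sub (by linarith : (-1:ℝ) < α - 2)).1).mono_set Set.Ioo_subset_Ioc_self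
  have hKint : IntegrableOn (fun p => (1 - p) ^ (α - 2) * L p) (Set.Ioo 0 1) volume := by
    apply Integrable.mono' hgint
      ((hcont2.mul (hLcont.mono (fun x hx => ⟨hx.1.le, hx.2.le⟩))).aestronglyMeasurable
        measurableSet_Ioo)
    filter_upwards [ae_restrict_mem measurableSet_Ioo] with p hp
    have h1 : (0:ℝ) ≤ 1 - p := by linarith [hp.2]
    have hmem : p ∈ Set.Icc (0:ℝ) 1 := ⟨hp.1.le, hp.2.le⟩
    simp only [Pi.mul_apply]
    rw [Real.norm_eq_abs, abs_mul, abs_of_nonneg (Real.rpow_nonneg h1 _),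
      abs_of_nonneg (hL0 p hmem)]
    calc (1 - p) ^ (α - 2) * L p ≤ (1 - p) ^ (α - 2) * 1 :=
          mul_le_mul_of_nonneg_left (hL1 p hmem) (Real.rpow_nonneg h1 _)
      _ = (1 - p) ^ (α - 2) := mul_one _
  have hKnn : 0 ≤ ∫ p in Set.Ioo (0:ℝ) 1, (1 - p) ^ (α - 2) * L p := by
    apply setIntegral_nonneg measurableSet_Ioo
    intro p hp
    exact mul_nonneg (Real.rpow_nonneg (by linarith [hp.2]) _) (hL0 p ⟨hp.1.le, hp.2.le⟩)
  have hJeq : (∫ t in (0:ℝ)..1, Q t * (1 - t) ^ (α - 1))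
      = ∫ t in Set.Ioo (0:ℝ) 1, Q t * (1 - t) ^ (α - 1) := by
    rw [intervalIntegral.integral_of_le zero_le_one, integral_Ioc_eq_integral_Ioo]
  -- Part 1 Fubini via layer cake
  have E1 : (∫ t in Set.Ioo (0:ℝ) 1, Q t * (1 - t) ^ (α - 1))
      = μF * (α - 1) * ∫ p in Set.Ioo (0:ℝ) 1, (1 - p) ^ (α - 2) * L p := by
    set ρ : Measure ℝ := (volume.restrict (Set.Ioo (0:ℝ) 1)).withDensity
      (fun t => ENNReal.ofReal (Q t)) with hρ
    have hρae : ∀ᵐ t ∂ρ, t ∈ Set.Ioo (0:ℝ) 1 :=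
      (ae_restrict_mem measurableSet_Ioo).filter_mono
        (withDensity_absolutelyContinuous _ _).ae_le
    have hdisj : Disjoint (Set.Ioo (0:ℝ) 1) (Set.Ici (1:ℝ)) :=
      Set.disjoint_left.mpr fun a ha hb => absurd hb (not_le.mpr ha.2)
    have hsplitfun : ∀ g : ℝ → ℝ≥0∞, (∫⁻ s in Set.Ioi (0:ℝ), g s)
        = (∫⁻ s in Set.Ioo (0:ℝ) 1, g s) + ∫⁻ s in Set.Ici (1:ℝ), g s := by
      intro g
      rw [← lintegral_union measurableSet_Ici hdisj, Set.Ioo_union_Ici_eq_Ioi zero_lt_one]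
    have hlay := lintegral_comp_eq_lintegral_meas_lt_mul ρ
      (f := fun t => 1 - t) (g := fun s => (α - 1) * s ^ (α - 1 - 1))
      (hρae.mono fun t ht => by show (0:ℝ) ≤ 1 - t; linarith [ht.2])
      ((measurable_const.sub measurable_id).aemeasurable)
      (fun s hs => (intervalIntegral.intervalIntegrable_rpow' (by linarith)).const_mul _)
      ((ae_restrict_mem measurableSet_Ioi).mono fun s hs =>
        mul_nonneg hα1.le (Real.rpow_nonneg (le_of_lt hs) _))
    beta_reduce at hlay
    have hLHS : ∫⁻ t, ENNReal.ofReal (∫ s in (0:ℝ)..(1 - t), (α - 1) * s ^ (α - 1 - 1)) ∂ρ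
        = ∫⁻ t, ENNReal.ofReal ((1 - t) ^ (α - 1)) ∂ρ := by
      apply lintegral_congr_ae
      filter_upwards [hρae] with t ht
      rw [dwk_rpow_ftc hα1]
    have hQae : AEMeasurable (fun t => ENNReal.ofReal (Q t))
        (volume.restrict (Set.Ioo (0:ℝ) 1)) :=
      ENNReal.measurable_ofReal.comp_aemeasurable hQint.aemeasurable
    have hwd : ∫⁻ t, ENNReal.ofReal ((1 - t) ^ (α - 1)) ∂ρ
        = ∫⁻ t in Set.Ioo (0:ℝ) 1, ENNReal.ofReal (Q t * (1 - t) ^ (α - 1)) := by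
      rw [hρ, lintegral_withDensity_eq_lintegral_mul₀
        (g := fun t => ENNReal.ofReal ((1 - t) ^ (α - 1))) hQae
        ((ENNReal.measurable_ofReal.comp hcont1.measurable).aemeasurable)]
      apply lintegral_congr_ae
      filter_upwards [ae_restrict_mem measurableSet_Ioo] with t ht
      simp only [Pi.mul_apply]
      rw [← ENNReal.ofReal_mul (hQ0 t)]
    have hmeasρ : ∀ s ∈ Set.Ioo (0:ℝ) 1,
        ρ {t : ℝ | s < 1 - t} = ENNReal.ofReal (μF * L (1 - s)) := by
      intro s hs
      have hmem : (1:ℝ) - s ∈ Set.Icc (0:ℝ) 1 := ⟨by linarith [hs.2], by linarith [hs.1]⟩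
      have hset : {t : ℝ | s < 1 - t} = Set.Iio (1 - s) := by
        ext t; simp only [Set.mem_setOf_eq, Set.mem_Iio]
        constructor <;> intro h <;> linarith
      rw [hset, hρ, withDensity_apply _ measurableSet_Iio,
        Measure.restrict_restrict measurableSet_Iio]
      have hset2 : Set.Iio (1 - s) ∩ Set.Ioo 0 1 = Set.Ioo 0 (1 - s) := by
        ext t; simp only [Set.mem_inter_iff, Set.mem_Iio, Set.mem_Ioo]
        constructor
        · rintro ⟨h1, h2, h3⟩; exact ⟨h2, h1⟩
        · rintro ⟨h1, h2⟩; exact ⟨h2, h1, by linarith [hs.1]⟩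
      rw [hset2, hLval (1 - s) hmem]
      exact (ofReal_integral_eq_lintegral_ofReal (hQsub (1 - s) hmem)
        ((ae_restrict_mem measurableSet_Ioo).mono fun t ht => hQ0 t)).symm
    have hmeasρ0 : ∀ s : ℝ, 1 ≤ s → ρ {t : ℝ | s < 1 - t} = 0 := by
      intro s hs
      have hset : {t : ℝ | s < 1 - t} = Set.Iio (1 - s) := by
        ext t; simp only [Set.mem_setOf_eq, Set.mem_Iio]
        constructor <;> intro h <;> linarith
      rw [hset, hρ, withDensity_apply _ measurableSet_Iio,
        Measure.restrict_restrict measurableSet_Iio]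
      have hset2 : Set.Iio (1 - s) ∩ Set.Ioo 0 1 = (∅ : Set ℝ) := by
        apply Set.eq_empty_iff_forall_notMem.mpr
        rintro t ⟨h1, h2, h3⟩
        simp only [Set.mem_Iio] at h1
        linarith
      rw [hset2]
      simp
    have hzero : ∫⁻ s in Set.Ici (1:ℝ),
        ρ {t : ℝ | s < 1 - t} * ENNReal.ofReal ((α - 1) * s ^ (α - 1 - 1)) = 0 := by
      rw [setLIntegral_congr_fun (g := fun _ => 0) measurableSet_Ici
        (fun s (hs : s ∈ Set.Ici (1:ℝ)) => by
          rw [hmeasρ0 s hs, zero_mul])]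
      simp
    have hRHS : ∫⁻ s in Set.Ioi (0:ℝ),
          ρ {t : ℝ | s < 1 - t} * ENNReal.ofReal ((α - 1) * s ^ (α - 1 - 1))
        = ∫⁻ s in Set.Ioo (0:ℝ) 1,
            ENNReal.ofReal (μF * L (1 - s) * ((α - 1) * s ^ (α - 1 - 1))) := by
      rw [hsplitfun, hzero, add_zero]
      apply setLIntegral_congr_fun measurableSet_Ioo
      intro s hs
      beta_reduce
      rw [hmeasρ s hs, ← ENNReal.ofReal_mul
        (mul_nonneg hμpos.le (hL0 (1 - s) ⟨by linarith [hs.2], by linarith [hs.1]⟩))]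
    have hrefl := dwk_refl_lintegral
      (fun p => ENNReal.ofReal (μF * L p * ((α - 1) * (1 - p) ^ (α - 1 - 1))))
    simp only [_root_.sub_sub_cancel] at hrefl
    have hfunx : (fun p => μF * L p * ((α - 1) * (1 - p) ^ (α - 1 - 1)))
        = fun p => (μF * (α - 1)) * ((1 - p) ^ (α - 2) * L p) := by
      funext p
      rw [show α - 1 - 1 = α - 2 by ring]
      ring
    have hint2 : IntegrableOn (fun p => μF * L p * ((α - 1) * (1 - p) ^ (α - 1 - 1)))
        (Set.Ioo (0:ℝ) 1) volume := by
      rw [hfunx]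
      exact hKint.const_mul _
    have hfin : ∫⁻ p in Set.Ioo (0:ℝ) 1,
          ENNReal.ofReal (μF * L p * ((α - 1) * (1 - p) ^ (α - 1 - 1)))
        = ENNReal.ofReal (∫ p in Set.Ioo (0:ℝ) 1,
            μF * L p * ((α - 1) * (1 - p) ^ (α - 1 - 1))) := by
      rw [← ofReal_integral_eq_lintegral_ofReal hint2]
      filter_upwards [ae_restrict_mem measurableSet_Ioo] with p hp
      have h1 : (0:ℝ) ≤ 1 - p := by linarith [hp.2]
      exact mul_nonneg (mul_nonneg hμpos.le (hL0 p ⟨hp.1.le, hp.2.le⟩))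
        (mul_nonneg hα1.le (Real.rpow_nonneg h1 _))
    have hval : (∫ p in Set.Ioo (0:ℝ) 1, μF * L p * ((α - 1) * (1 - p) ^ (α - 1 - 1)))
        = μF * (α - 1) * ∫ p in Set.Ioo (0:ℝ) 1, (1 - p) ^ (α - 2) * L p := by
      rw [hfunx, integral_const_mul]
    have hJ : ENNReal.ofReal (∫ t in Set.Ioo (0:ℝ) 1, Q t * (1 - t) ^ (α - 1))
        = ∫⁻ t in Set.Ioo (0:ℝ) 1, ENNReal.ofReal (Q t * (1 - t) ^ (α - 1)) := by
      apply ofReal_integral_eq_lintegral_ofReal hJint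
      filter_upwards [ae_restrict_mem measurableSet_Ioo] with t ht
      exact mul_nonneg (hQ0 t) (Real.rpow_nonneg (by linarith [ht.2]) _)
    rw [hLHS, hwd, hRHS, hrefl, hfin, hval] at hlay
    rw [← hJ] at hlay
    exact (ENNReal.ofReal_eq_ofReal_iff hJnn
      (mul_nonneg (mul_nonneg hμpos.le hα1.le) hKnn)).mp hlay
  -- Part 2 via layer cake
  have E2 : (∫ x in Set.Ioi (0:ℝ), (1 - F x) ^ α)
      = α * ∫ t in Set.Ioo (0:ℝ) 1, Q t * (1 - t) ^ (α - 1) := by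
    have hf_nn : ∀ x : ℝ, (0:ℝ) ≤ 1 - F x := fun x => by linarith [hF1 x]
    have hdisj : Disjoint (Set.Ioo (0:ℝ) 1) (Set.Ici (1:ℝ)) :=
      Set.disjoint_left.mpr fun a ha hb => absurd hb (not_le.mpr ha.2)
    have hsplitfun : ∀ g : ℝ → ℝ≥0∞, (∫⁻ t in Set.Ioi (0:ℝ), g t)
        = (∫⁻ t in Set.Ioo (0:ℝ) 1, g t) + ∫⁻ t in Set.Ici (1:ℝ), g t := by
      intro g
      rw [← lintegral_union measurableSet_Ici hdisj, Set.Ioo_union_Ici_eq_Ioi zero_lt_one]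
    have hlay := lintegral_comp_eq_lintegral_meas_lt_mul (volume.restrict (Set.Ioi (0:ℝ)))
      (f := fun x => 1 - F x) (g := fun s => α * s ^ (α - 1))
      (Filter.Eventually.of_forall hf_nn)
      ((measurable_const.sub hFmble).aemeasurable)
      (fun t ht => (intervalIntegral.intervalIntegrable_rpow' (by linarith)).const_mul _)
      ((ae_restrict_mem measurableSet_Ioi).mono fun t ht =>
        mul_nonneg hα0.le (Real.rpow_nonneg (le_of_lt ht) _))
    beta_reduce at hlay
    -- simplify LHS of layer cake
    have hLHS : ∫⁻ x in Set.Ioi (0:ℝ), ENNReal.ofReal (∫ s in (0:ℝ)..(1 - F x), α * s ^ (α - 1))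
        = ∫⁻ x in Set.Ioi (0:ℝ), ENNReal.ofReal ((1 - F x) ^ α) := by
      apply lintegral_congr_ae
      apply Filter.Eventually.of_forall
      intro x
      exact congrArg ENNReal.ofReal (dwk_rpow_ftc hα0)
    -- simplify RHS of layer cake
    have hmeas1 : ∀ t ∈ Set.Ioo (0:ℝ) 1,
        (volume.restrict (Set.Ioi (0:ℝ))) {x : ℝ | t < 1 - F x} = ENNReal.ofReal (Q (1 - t)) := by
      intro t ht
      rw [Measure.restrict_apply' measurableSet_Ioi]
      have hset : {x : ℝ | t < 1 - F x} = {x : ℝ | F x < 1 - t} := by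
        ext x; simp only [Set.mem_setOf_eq]; constructor <;> intro h <;> linarith
      rw [hset, hlevel (1 - t) (by linarith [ht.2]) (by linarith [ht.1])]
    have hmeas0 : ∀ t : ℝ, 1 ≤ t →
        (volume.restrict (Set.Ioi (0:ℝ))) {x : ℝ | t < 1 - F x} = 0 := by
      intro t htt
      have hempty : {x : ℝ | t < 1 - F x} = (∅ : Set ℝ) := by
        ext x; simp only [Set.mem_setOf_eq, Set.mem_empty_iff_false, iff_false, not_lt]
        linarith [hF0 x]
      rw [hempty]
      simp
    have hzero : ∫⁻ t in Set.Ici (1:ℝ),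
        (volume.restrict (Set.Ioi (0:ℝ))) {x : ℝ | t < 1 - F x} * ENNReal.ofReal (α * t ^ (α - 1))
        = 0 := by
      rw [setLIntegral_congr_fun (g := fun _ => 0) measurableSet_Ici
        (fun t (htt : t ∈ Set.Ici (1:ℝ)) => by
          rw [hmeas0 t htt, zero_mul])]
      simp
    have hRHS : ∫⁻ t in Set.Ioi (0:ℝ),
          (volume.restrict (Set.Ioi (0:ℝ))) {x : ℝ | t < 1 - F x} * ENNReal.ofReal (α * t ^ (α - 1))
        = ∫⁻ t in Set.Ioo (0:ℝ) 1, ENNReal.ofReal (Q (1 - t) * (α * t ^ (α - 1))) := by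
      rw [hsplitfun, hzero, add_zero]
      apply setLIntegral_congr_fun measurableSet_Ioo
      intro t ht
      beta_reduce
      rw [hmeas1 t ht, ← ENNReal.ofReal_mul (hQ0 _)]
    have hrefl := dwk_refl_lintegral (fun u => ENNReal.ofReal (Q u * (α * (1 - u) ^ (α - 1))))
    simp only [_root_.sub_sub_cancel] at hrefl
    have hint2 : IntegrableOn (fun u => Q u * (α * (1 - u) ^ (α - 1))) (Set.Ioo (0:ℝ) 1) volume := by
      have h : (fun u => Q u * (α * (1 - u) ^ (α - 1)))
          = fun u => α * (Q u * (1 - u) ^ (α - 1)) := by funext u; ring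
      rw [h]
      exact hJint.const_mul α
    have hfin : ∫⁻ u in Set.Ioo (0:ℝ) 1, ENNReal.ofReal (Q u * (α * (1 - u) ^ (α - 1)))
        = ENNReal.ofReal (∫ u in Set.Ioo (0:ℝ) 1, Q u * (α * (1 - u) ^ (α - 1))) := by
      rw [← ofReal_integral_eq_lintegral_ofReal hint2]
      filter_upwards [ae_restrict_mem measurableSet_Ioo] with u hu
      exact mul_nonneg (hQ0 u) (mul_nonneg hα0.le (Real.rpow_nonneg (by linarith [hu.2]) _))
    have hval : (∫ u in Set.Ioo (0:ℝ) 1, Q u * (α * (1 - u) ^ (α - 1)))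
        = α * ∫ t in Set.Ioo (0:ℝ) 1, Q t * (1 - t) ^ (α - 1) := by
      have h : (fun u => Q u * (α * (1 - u) ^ (α - 1)))
          = fun u => α * (Q u * (1 - u) ^ (α - 1)) := by funext u; ring
      rw [h, integral_const_mul]
    have hcontα : Continuous (fun y : ℝ => y ^ α) :=
      continuous_iff_continuousAt.mpr
        (fun x => Real.continuousAt_rpow_const x _ (Or.inr hα0.le))
    have hZ : (∫ x in Set.Ioi (0:ℝ), (1 - F x) ^ α)
        = (∫⁻ x in Set.Ioi (0:ℝ), ENNReal.ofReal ((1 - F x) ^ α)).toReal := by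
      rw [integral_eq_lintegral_of_nonneg_ae
        (Filter.Eventually.of_forall (fun x => Real.rpow_nonneg (hf_nn x) _))
        ((hcontα.measurable.comp (measurable_const.sub hFmble)).aestronglyMeasurable)]
    rw [hLHS, hRHS, hrefl, hfin, hval] at hlay
    rw [hZ, hlay, ENNReal.toReal_ofReal (mul_nonneg hα0.le hJnn)]
  -- split the LHS integral of part 1
  have i1 : IntervalIntegrable (fun p : ℝ => (1 - p) ^ (α - 2) * p) volume 0 1 := by
    rw [intervalIntegrable_iff_integrableOn_Ioo_of_le zero_le_one]
    apply Integrable.mono' hgint ((hcont2.mul continuousOn_id).aestronglyMeasurable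
      measurableSet_Ioo)
    filter_upwards [ae_restrict_mem measurableSet_Ioo] with p hp
    have h1 : (0:ℝ) ≤ 1 - p := by linarith [hp.2]
    simp only [Pi.mul_apply, id_eq]
    rw [Real.norm_eq_abs, abs_mul, abs_of_nonneg (Real.rpow_nonneg h1 _),
      abs_of_nonneg hp.1.le]
    calc (1 - p) ^ (α - 2) * p ≤ (1 - p) ^ (α - 2) * 1 :=
          mul_le_mul_of_nonneg_left hp.2.le (Real.rpow_nonneg h1 _)
      _ = (1 - p) ^ (α - 2) := mul_one _
  have i2 : IntervalIntegrable (fun p : ℝ => (1 - p) ^ (α - 2) * L p) volume 0 1 := by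
    rw [intervalIntegrable_iff_integrableOn_Ioo_of_le zero_le_one]
    exact hKint
  have hsplit : (∫ p in (0:ℝ)..1, (1 - p) ^ (α - 2) * (p - L p))
      = 1 / ((α - 1) * α) - ∫ p in Set.Ioo (0:ℝ) 1, (1 - p) ^ (α - 2) * L p := by
    have e1 : (∫ p in (0:ℝ)..1, (1 - p) ^ (α - 2) * (p - L p))
        = ∫ p in (0:ℝ)..1, ((1 - p) ^ (α - 2) * p - (1 - p) ^ (α - 2) * L p) := by
      congr 1
      funext p
      ring
    rw [e1, intervalIntegral.integral_sub i1 i2, dwk_c3 hα,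
      intervalIntegral.integral_of_le zero_le_one, integral_Ioc_eq_integral_Ioo]
  constructor
  · rw [hsplit, hJeq, E1]
    have hαne : α ≠ 0 := ne_of_gt hα0
    have hα1ne : α - 1 ≠ 0 := ne_of_gt hα1
    field_simp
  · rw [hJeq, E2]
    ring
end

section
/- Let X be a nonnegative random variable with cdf F and α ∈ (0,1). If π has density α(1−p)^{α−1} on (0,1) (i.e. π ∼ Beta(1,α)), then μ_F·(E[UCE_F(π)/μ_F − 1]·(1−α) + 1) = ∫₀^∞ (1−F(x))^α dx, the proportional-hazards-transform risk measure. -/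
open MeasureTheory Set Filter Topology

theorem pht_risk_measure_representation
    (ν : Measure ℝ) [IsProbabilityMeasure ν] (hsupp : ν (Set.Iio 0) = 0)
    (F Q : ℝ → ℝ)
    (hF : ∀ x, F x = (ν (Set.Iic x)).toReal)
    (hQ : ∀ t, Q t = sInf {x : ℝ | 0 ≤ x ∧ t ≤ F x})
    (μF : ℝ) (hμF : μF = ∫ t in Set.Ioo (0:ℝ) 1, Q t) (hμpos : 0 < μF)
    (hQint : IntegrableOn Q (Set.Ioo 0 1) volume)
    (UCE : ℝ → ℝ) (hUCE : ∀ p, UCE p = (1 / (1 - p)) * ∫ t in p..(1:ℝ), Q t)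
    (α : ℝ) (hα : α ∈ Set.Ioo (0:ℝ) 1)
    (hPHT : IntegrableOn (fun x => (1 - F x) ^ α) (Set.Ioi 0) volume) :
    μF * ((∫ p in Set.Ioo (0:ℝ) 1, (UCE p / μF - 1) * (α * (1 - p) ^ (α - 1))) * (1 - α) + 1)
      = ∫ x in Set.Ioi (0:ℝ), (1 - F x) ^ α := by
  obtain ⟨hα0, hα1⟩ := hα
  have hα1' : (0:ℝ) < 1 - α := by linarith
  -- basic facts about F
  have hFmono : Monotone F := by
    intro a b hab
    rw [hF, hF]
    exact ENNReal.toReal_mono (measure_ne_top _ _) (measure_mono (Set.Iic_subset_Iic.2 hab))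
  have hF0 : ∀ x, 0 ≤ F x := fun x => by rw [hF]; exact ENNReal.toReal_nonneg
  have hF1 : ∀ x, F x ≤ 1 := by
    intro x
    rw [hF]
    calc (ν (Set.Iic x)).toReal
        ≤ (ν Set.univ).toReal :=
          ENNReal.toReal_mono (measure_ne_top _ _) (measure_mono (Set.subset_univ _))
      _ = 1 := by simp
  have hFmeas : Measurable F := hFmono.measurable
  -- the key quantile fact
  have hkey : ∀ t ∈ Set.Ioo (0:ℝ) 1,
      0 ≤ Q t ∧ {x | 0 < x ∧ F x < t} = Set.Ioo 0 (Q t) := by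
    intro t ht
    have hbdd : BddBelow {x : ℝ | 0 ≤ x ∧ t ≤ F x} := ⟨0, fun x hx => hx.1⟩
    have hne : {x : ℝ | 0 ≤ x ∧ t ≤ F x}.Nonempty := by
      have h1 : Tendsto F atTop (𝓝 1) := by
        have h2 := (ENNReal.tendsto_toReal (measure_ne_top ν Set.univ)).comp
          (tendsto_measure_Iic_atTop ν)
        have h3 : (ν Set.univ).toReal = 1 := by simp
        rw [h3] at h2
        exact h2.congr fun x => (hF x).symm
      obtain ⟨x, hx⟩ := (h1.eventually (eventually_gt_nhds ht.2)).exists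
      exact ⟨max x 0, le_max_right _ _, hx.le.trans (hFmono (le_max_left _ _))⟩
    have hQt0 : 0 ≤ Q t := by
      rw [hQ]
      exact le_csInf hne fun x hx => hx.1
    have hFQt : t ≤ F (Q t) := by
      have hstep : ∀ n : ℕ, t ≤ F (Q t + 1 / (n + 1)) := by
        intro n
        have hpos : (0:ℝ) < 1 / (n + 1) := by positivity
        obtain ⟨s, hsS, hslt⟩ := exists_lt_of_csInf_lt hne (show sInf _ < Q t + 1 / (n + 1) by
          rw [← hQ]; linarith)
        exact hsS.2.trans (hFmono hslt.le)
      have hIic : Set.Iic (Q t) = ⋂ n : ℕ, Set.Iic (Q t + 1 / (n + 1)) := by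
        ext y
        simp only [Set.mem_Iic, Set.mem_iInter]
        constructor
        · intro h n
          have : (0:ℝ) < 1 / (n + 1) := by positivity
          linarith
        · intro h
          by_contra hy
          push_neg at hy
          obtain ⟨n, hn⟩ := exists_nat_one_div_lt (sub_pos.2 hy)
          have h2 := h n
          have h3 : (1:ℝ) / (n + 1) < y - Q t := by exact_mod_cast hn
          linarith
      have htend : Tendsto (fun n : ℕ => ν (Set.Iic (Q t + 1 / (n + 1)))) atTop
          (𝓝 (ν (Set.Iic (Q t)))) := by
        rw [hIic]
        refine tendsto_measure_iInter_atTop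
          (fun n => measurableSet_Iic.nullMeasurableSet) ?_ ⟨0, measure_ne_top _ _⟩
        intro m n hmn
        apply Set.Iic_subset_Iic.2
        have h4 : (1:ℝ) / (n + 1) ≤ 1 / (m + 1) := by
          apply one_div_le_one_div_of_le (by positivity)
          exact_mod_cast Nat.succ_le_succ hmn
        linarith
      have htend2 : Tendsto (fun n : ℕ => F (Q t + 1 / (n + 1))) atTop (𝓝 (F (Q t))) := by
        have h5 := (ENNReal.tendsto_toReal (measure_ne_top ν _)).comp htend
        rw [hF (Q t)]
        exact h5.congr fun n => (hF _).symm
      exact ge_of_tendsto htend2 (Filter.Eventually.of_forall hstep)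
    refine ⟨hQt0, ?_⟩
    ext x
    simp only [Set.mem_setOf_eq, Set.mem_Ioo]
    constructor
    · rintro ⟨hx0, hxF⟩
      refine ⟨hx0, ?_⟩
      by_contra h
      push_neg at h
      exact absurd (hFQt.trans (hFmono h)) (not_le.2 hxF)
    · rintro ⟨hx0, hxQ⟩
      refine ⟨hx0, ?_⟩
      by_contra h
      push_neg at h
      have : Q t ≤ x := by
        rw [hQ]; exact csInf_le hbdd ⟨hx0.le, h⟩
      linarith
  -- interval integrability of the weight
  have hrpow1_ii : ∀ a b : ℝ, IntervalIntegrable (fun t => α * (1 - t) ^ (α - 1)) volume a b := by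
    intro a b
    have h1 := ((intervalIntegral.intervalIntegrable_rpow' (a := 1 - a) (b := 1 - b)
      (by linarith : (-1:ℝ) < α - 1)).comp_sub_left 1).const_mul α
    simpa using h1
  have hval1 : ∀ a : ℝ, 0 ≤ a → (∫ t in a..1, α * (1 - t) ^ (α - 1)) = (1 - a) ^ α := by
    intro a ha
    rw [intervalIntegral.integral_const_mul,
      intervalIntegral.integral_comp_sub_left (fun u => u ^ (α - 1)) 1,
      integral_rpow (Or.inl (by linarith : (-1:ℝ) < α - 1))]
    rw [show α - 1 + 1 = α by ring, sub_self, Real.zero_rpow (ne_of_gt hα0)]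
    field_simp
    simp
  -- Step A : lintegral swap for the RHS
  have hx_eq : ∀ x : ℝ,
      (∫⁻ t in Set.Ioo (0:ℝ) 1,
        (Set.Ioi (F x)).indicator (fun t => ENNReal.ofReal (α * (1 - t) ^ (α - 1))) t)
      = ENNReal.ofReal ((1 - F x) ^ α) := by
    intro x
    rw [lintegral_indicator measurableSet_Ioi, Measure.restrict_restrict measurableSet_Ioi]
    have h2 : Set.Ioi (F x) ∩ Set.Ioo 0 1 = Set.Ioo (F x) 1 := by
      ext u
      simp only [Set.mem_inter_iff, Set.mem_Ioi, Set.mem_Ioo]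
      constructor
      · rintro ⟨h3, _, h5⟩; exact ⟨h3, h5⟩
      · rintro ⟨h3, h4⟩; exact ⟨h3, lt_of_le_of_lt (hF0 x) h3, h4⟩
    rw [h2]
    have hint : IntegrableOn (fun t => α * (1 - t) ^ (α - 1)) (Set.Ioo (F x) 1) volume :=
      (intervalIntegrable_iff_integrableOn_Ioo_of_le (hF1 x)).1 (hrpow1_ii _ _)
    rw [← MeasureTheory.ofReal_integral_eq_lintegral_ofReal hint
      ((ae_restrict_iff' measurableSet_Ioo).2 (Filter.Eventually.of_forall fun t htt =>
        mul_nonneg hα0.le (Real.rpow_nonneg (by linarith [htt.2]) _)))]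
    congr 1
    rw [← MeasureTheory.integral_Ioc_eq_integral_Ioo, ← intervalIntegral.integral_of_le (hF1 x)]
    exact hval1 (F x) (hF0 x)
  have hwmeas : Measurable (fun t : ℝ => ENNReal.ofReal (α * (1 - t) ^ (α - 1))) := by
    apply ENNReal.measurable_ofReal.comp
    fun_prop
  have hA : (∫⁻ x in Set.Ioi (0:ℝ), ENNReal.ofReal ((1 - F x) ^ α))
      = ∫⁻ t in Set.Ioo (0:ℝ) 1, ENNReal.ofReal (α * (1 - t) ^ (α - 1) * Q t) := by
    have hf_meas : Measurable (Function.uncurry fun (x t : ℝ) =>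
        (Set.Ioi (F x)).indicator (fun s => ENNReal.ofReal (α * (1 - s) ^ (α - 1))) t) := by
      have : (Function.uncurry fun (x t : ℝ) =>
          (Set.Ioi (F x)).indicator (fun s => ENNReal.ofReal (α * (1 - s) ^ (α - 1))) t)
          = fun z : ℝ × ℝ => if F z.1 < z.2 then ENNReal.ofReal (α * (1 - z.2) ^ (α - 1)) else 0 := by
        funext z
        simp [Function.uncurry, Set.indicator, Set.mem_Ioi]
      rw [this]
      exact Measurable.ite (measurableSet_lt (hFmeas.comp measurable_fst) measurable_snd)
        (hwmeas.comp measurable_snd) measurable_const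
    calc (∫⁻ x in Set.Ioi (0:ℝ), ENNReal.ofReal ((1 - F x) ^ α))
        = ∫⁻ x in Set.Ioi (0:ℝ), ∫⁻ t in Set.Ioo (0:ℝ) 1,
            (Set.Ioi (F x)).indicator (fun s => ENNReal.ofReal (α * (1 - s) ^ (α - 1))) t :=
          (lintegral_congr fun x => (hx_eq x).symm)
      _ = ∫⁻ t in Set.Ioo (0:ℝ) 1, ∫⁻ x in Set.Ioi (0:ℝ),
            (Set.Ioi (F x)).indicator (fun s => ENNReal.ofReal (α * (1 - s) ^ (α - 1))) t :=
          lintegral_lintegral_swap hf_meas.aemeasurable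
      _ = ∫⁻ t in Set.Ioo (0:ℝ) 1, ENNReal.ofReal (α * (1 - t) ^ (α - 1) * Q t) := by
          refine setLIntegral_congr_fun measurableSet_Ioo
            (fun t ht => ?_)
          have h1 : ∀ x : ℝ, (Set.Ioi (F x)).indicator
              (fun s => ENNReal.ofReal (α * (1 - s) ^ (α - 1))) t
              = ({x : ℝ | F x < t}).indicator
                  (fun _ => ENNReal.ofReal (α * (1 - t) ^ (α - 1))) x := by
            intro x
            simp only [Set.indicator, Set.mem_Ioi, Set.mem_setOf_eq]
          simp_rw [h1]
          rw [lintegral_indicator (measurableSet_lt hFmeas measurable_const),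
            Measure.restrict_restrict (measurableSet_lt hFmeas measurable_const), lintegral_const,
            Measure.restrict_apply_univ]
          have h2 : {x : ℝ | F x < t} ∩ Set.Ioi 0 = Set.Ioo 0 (Q t) := by
            rw [← (hkey t ht).2]
            ext x
            simp only [Set.mem_inter_iff, Set.mem_setOf_eq, Set.mem_Ioi]
            tauto
          rw [h2, Real.volume_Ioo, sub_zero,
            ← ENNReal.ofReal_mul (mul_nonneg hα0.le (Real.rpow_nonneg (by linarith [ht.2]) _))]
  -- convert RHS to the K-integral
  have hRnn : 0 ≤ᵐ[volume.restrict (Set.Ioi (0:ℝ))] fun x => (1 - F x) ^ α :=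
    Filter.Eventually.of_forall fun x => Real.rpow_nonneg (by linarith [hF1 x]) _
  have hLofReal : ENNReal.ofReal (∫ x in Set.Ioi (0:ℝ), (1 - F x) ^ α)
      = ∫⁻ x in Set.Ioi (0:ℝ), ENNReal.ofReal ((1 - F x) ^ α) :=
    ofReal_integral_eq_lintegral_ofReal hPHT hRnn
  have hfin : (∫⁻ t in Set.Ioo (0:ℝ) 1, ENNReal.ofReal (α * (1 - t) ^ (α - 1) * Q t)) ≠ ⊤ := by
    rw [← hA, ← hLofReal]
    exact ENNReal.ofReal_ne_top
  have hKnnpt : ∀ t ∈ Set.Ioo (0:ℝ) 1, 0 ≤ α * (1 - t) ^ (α - 1) * Q t := fun t ht =>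
    mul_nonneg (mul_nonneg hα0.le (Real.rpow_nonneg (by linarith [ht.2]) _)) (hkey t ht).1
  have hKnnae : 0 ≤ᵐ[volume.restrict (Set.Ioo (0:ℝ) 1)] fun t => α * (1 - t) ^ (α - 1) * Q t :=
    (ae_restrict_iff' measurableSet_Ioo).2 (Filter.Eventually.of_forall hKnnpt)
  have hKint : IntegrableOn (fun t => α * (1 - t) ^ (α - 1) * Q t) (Set.Ioo (0:ℝ) 1) volume := by
    have hm1 : Measurable fun t : ℝ => α * (1 - t) ^ (α - 1) := by fun_prop
    constructor
    · exact hm1.aestronglyMeasurable.mul hQint.aestronglyMeasurable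
    · rw [hasFiniteIntegral_iff_ofReal hKnnae]
      exact hfin.lt_top
  have hKval : (∫ t in Set.Ioo (0:ℝ) 1, α * (1 - t) ^ (α - 1) * Q t)
      = ∫ x in Set.Ioi (0:ℝ), (1 - F x) ^ α := by
    have h1 : ENNReal.ofReal (∫ t in Set.Ioo (0:ℝ) 1, α * (1 - t) ^ (α - 1) * Q t)
        = ENNReal.ofReal (∫ x in Set.Ioi (0:ℝ), (1 - F x) ^ α) := by
      rw [ofReal_integral_eq_lintegral_ofReal hKint hKnnae, hLofReal, hA]
    exact (ENNReal.ofReal_eq_ofReal_iff (setIntegral_nonneg measurableSet_Ioo hKnnpt)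
      (setIntegral_nonneg measurableSet_Ioi
        (fun x _ => Real.rpow_nonneg (by linarith [hF1 x]) _))).1 h1
  -- Step B : the UCE side
  set K : ℝ := ∫ t in Set.Ioo (0:ℝ) 1, α * (1 - t) ^ (α - 1) * Q t with hK
  set W : ℝ → ℝ := fun p => ∫ t in p..(1:ℝ), Q t with hWdef
  set g : ℝ → ℝ := fun p => α * (1 - p) ^ (α - 2) with hgdef
  have hgmeas : Measurable g := by rw [hgdef]; fun_prop
  have hgnn : ∀ p : ℝ, p < 1 → 0 ≤ g p := fun p hp =>
    mul_nonneg hα0.le (Real.rpow_nonneg (by linarith) _)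
  have hQnnpt : ∀ t ∈ Set.Ioo (0:ℝ) 1, 0 ≤ Q t := fun t ht => (hkey t ht).1
  have hWint_Ioo : ∀ p ∈ Set.Ioo (0:ℝ) 1, W p = ∫ t in Set.Ioo p 1, Q t := by
    intro p hp
    rw [hWdef]
    simp only []
    rw [intervalIntegral.integral_of_le hp.2.le, MeasureTheory.integral_Ioc_eq_integral_Ioo]
  have hWnn : ∀ p ∈ Set.Ioo (0:ℝ) 1, 0 ≤ W p := by
    intro p hp
    rw [hWint_Ioo p hp]
    exact setIntegral_nonneg measurableSet_Ioo fun t ht => hQnnpt t ⟨hp.1.trans ht.1, ht.2⟩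
  have hWlin : ∀ p ∈ Set.Ioo (0:ℝ) 1,
      ENNReal.ofReal (W p) = ∫⁻ t in Set.Ioo p 1, ENNReal.ofReal (Q t) := by
    intro p hp
    rw [hWint_Ioo p hp]
    refine ofReal_integral_eq_lintegral_ofReal (hQint.mono_set (Set.Ioo_subset_Ioo_left hp.1.le))
      ((ae_restrict_iff' measurableSet_Ioo).2 (Filter.Eventually.of_forall fun t ht =>
        hQnnpt t ⟨hp.1.trans ht.1, ht.2⟩))
  have hg_int : ∀ t ∈ Set.Ioo (0:ℝ) 1, IntegrableOn g (Set.Ioo 0 t) volume := by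
    intro t ht
    have h1 : IntervalIntegrable (fun u : ℝ => u ^ (α - 2)) volume (1 - 0) (1 - t) := by
      apply intervalIntegral.intervalIntegrable_rpow (Or.inr ?_)
      intro hmem
      rw [Set.mem_uIcc] at hmem
      rcases hmem with ⟨h1, h2⟩ | ⟨h1, h2⟩ <;> linarith [ht.2]
    have h2 := (h1.comp_sub_left 1).const_mul α
    simp only [sub_sub_cancel] at h2
    exact (intervalIntegrable_iff_integrableOn_Ioo_of_le ht.1.le).1 h2
  have hgval : ∀ t ∈ Set.Ioo (0:ℝ) 1, (∫ p in (0:ℝ)..t, g p)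
      = (α / (1 - α)) * ((1 - t) ^ (α - 1) - 1) := by
    intro t ht
    have hne2 : α - 2 + 1 ≠ 0 := by intro h; exact hα1.ne (by linarith)
    rw [hgdef]
    simp only []
    rw [intervalIntegral.integral_const_mul,
      intervalIntegral.integral_comp_sub_left (fun u => u ^ (α - 2)) 1,
      integral_rpow (Or.inr ⟨by intro h; exact hα1.ne (by linarith), by
        intro hmem
        rw [Set.mem_uIcc] at hmem
        rcases hmem with ⟨h1, h2⟩ | ⟨h1, h2⟩ <;> linarith [ht.2]⟩)]
    rw [show (1:ℝ) - 0 = 1 from by norm_num, show α - 2 + 1 = α - 1 from by ring, Real.one_rpow]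
    have h1a : (1:ℝ) - α ≠ 0 := ne_of_gt hα1'
    have h1b : α - 1 ≠ 0 := by intro h; exact hα1.ne (by linarith)
    field_simp
    ring
  have hcnn : ∀ t ∈ Set.Ioo (0:ℝ) 1, 0 ≤ (α / (1 - α)) * ((1 - t) ^ (α - 1) - 1) := by
    intro t ht
    apply mul_nonneg (div_nonneg hα0.le hα1'.le)
    have h1 : (1:ℝ) ≤ (1 - t) ^ (α - 1) :=
      Real.one_le_rpow_of_pos_of_le_one_of_nonpos (by linarith [ht.2]) (by linarith [ht.1])
        (by linarith)
    linarith
  -- measurable modification of Q for the product measurability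
  have hQae : AEMeasurable Q (volume.restrict (Set.Ioo (0:ℝ) 1)) :=
    hQint.aestronglyMeasurable.aemeasurable
  have hQ'meas : Measurable (hQae.mk Q) := hQae.measurable_mk
  have hQQ' : Q =ᵐ[volume.restrict (Set.Ioo (0:ℝ) 1)] hQae.mk Q := hQae.ae_eq_mk
  have hfBae : AEMeasurable (Function.uncurry fun (p t : ℝ) =>
      if p < t then ENNReal.ofReal (g p) * ENNReal.ofReal (Q t) else 0)
      ((volume.restrict (Set.Ioo (0:ℝ) 1)).prod (volume.restrict (Set.Ioo (0:ℝ) 1))) := by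
    have hmeas : Measurable fun z : ℝ × ℝ =>
        if z.1 < z.2 then ENNReal.ofReal (g z.1) * ENNReal.ofReal (hQae.mk Q z.2) else 0 := by
      refine Measurable.ite (measurableSet_lt measurable_fst measurable_snd) ?_ measurable_const
      exact ((ENNReal.measurable_ofReal.comp hgmeas).comp measurable_fst).mul
        ((ENNReal.measurable_ofReal.comp hQ'meas).comp measurable_snd)
    refine hmeas.aemeasurable.congr ?_
    have hsnd : (fun z : ℝ × ℝ => Q z.2)
        =ᵐ[(volume.restrict (Set.Ioo (0:ℝ) 1)).prod (volume.restrict (Set.Ioo (0:ℝ) 1))]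
        fun z => hQae.mk Q z.2 :=
      hQQ'.comp_tendsto Measure.quasiMeasurePreserving_snd.tendsto_ae
    filter_upwards [hsnd] with z hz
    simp only [Function.uncurry]
    rw [hz]
  -- the swap for step B
  have hB : (∫⁻ p in Set.Ioo (0:ℝ) 1, ENNReal.ofReal (g p * W p))
      = ∫⁻ t in Set.Ioo (0:ℝ) 1,
          ENNReal.ofReal (Q t * ((α / (1 - α)) * ((1 - t) ^ (α - 1) - 1))) := by
    calc (∫⁻ p in Set.Ioo (0:ℝ) 1, ENNReal.ofReal (g p * W p))
        = ∫⁻ p in Set.Ioo (0:ℝ) 1, ∫⁻ t in Set.Ioo (0:ℝ) 1,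
            (if p < t then ENNReal.ofReal (g p) * ENNReal.ofReal (Q t) else 0) := by
          refine setLIntegral_congr_fun measurableSet_Ioo
            (fun p hp => ?_)
          rw [ENNReal.ofReal_mul (hgnn p hp.2), hWlin p hp]
          have h1 : (fun t => if p < t then ENNReal.ofReal (g p) * ENNReal.ofReal (Q t) else 0)
              = fun t => (Set.Ioi p).indicator
                  (fun s => ENNReal.ofReal (g p) * ENNReal.ofReal (Q s)) t := by
            funext s
            simp only [Set.indicator, Set.mem_Ioi]
          rw [h1, lintegral_indicator measurableSet_Ioi,
            Measure.restrict_restrict measurableSet_Ioi]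
          have h2 : Set.Ioi p ∩ Set.Ioo 0 1 = Set.Ioo p 1 := by
            ext u
            simp only [Set.mem_inter_iff, Set.mem_Ioi, Set.mem_Ioo]
            constructor
            · rintro ⟨h3, _, h5⟩; exact ⟨h3, h5⟩
            · rintro ⟨h3, h4⟩; exact ⟨h3, hp.1.trans h3, h4⟩
          rw [h2, lintegral_const_mul' _ _ ENNReal.ofReal_ne_top]
      _ = ∫⁻ t in Set.Ioo (0:ℝ) 1, ∫⁻ p in Set.Ioo (0:ℝ) 1,
            (if p < t then ENNReal.ofReal (g p) * ENNReal.ofReal (Q t) else 0) :=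
          lintegral_lintegral_swap hfBae
      _ = ∫⁻ t in Set.Ioo (0:ℝ) 1,
            ENNReal.ofReal (Q t * ((α / (1 - α)) * ((1 - t) ^ (α - 1) - 1))) := by
          refine setLIntegral_congr_fun measurableSet_Ioo
            (fun t ht => ?_)
          have h1 : (fun p => if p < t then ENNReal.ofReal (g p) * ENNReal.ofReal (Q t) else 0)
              = fun p => (Set.Iio t).indicator
                  (fun s => ENNReal.ofReal (g s) * ENNReal.ofReal (Q t)) p := by
            funext s
            simp only [Set.indicator, Set.mem_Iio]
          rw [h1, lintegral_indicator measurableSet_Iio,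
            Measure.restrict_restrict measurableSet_Iio]
          have h2 : Set.Iio t ∩ Set.Ioo 0 1 = Set.Ioo 0 t := by
            ext u
            simp only [Set.mem_inter_iff, Set.mem_Iio, Set.mem_Ioo]
            constructor
            · rintro ⟨h3, h4, _⟩; exact ⟨h4, h3⟩
            · rintro ⟨h3, h4⟩; exact ⟨h4, h3, h4.trans ht.2⟩
          rw [h2, lintegral_mul_const' _ _ ENNReal.ofReal_ne_top]
          have h3 : (∫⁻ p in Set.Ioo (0:ℝ) t, ENNReal.ofReal (g p))
              = ENNReal.ofReal ((α / (1 - α)) * ((1 - t) ^ (α - 1) - 1)) := by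
            rw [← ofReal_integral_eq_lintegral_ofReal (hg_int t ht)
              ((ae_restrict_iff' measurableSet_Ioo).2 (Filter.Eventually.of_forall fun p hp =>
                hgnn p (hp.2.trans ht.2)))]
            congr 1
            rw [← MeasureTheory.integral_Ioc_eq_integral_Ioo,
              ← intervalIntegral.integral_of_le ht.1.le]
            exact hgval t ht
          rw [h3, ← ENNReal.ofReal_mul (hcnn t ht), mul_comm]
  -- finiteness of the B-integral
  have hBfin : (∫⁻ p in Set.Ioo (0:ℝ) 1, ENNReal.ofReal (g p * W p)) ≠ ⊤ := by
    rw [hB]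
    have hle : ∀ t ∈ Set.Ioo (0:ℝ) 1,
        ENNReal.ofReal (Q t * ((α / (1 - α)) * ((1 - t) ^ (α - 1) - 1)))
        ≤ ENNReal.ofReal ((1 / (1 - α)) * (α * (1 - t) ^ (α - 1) * Q t)) := by
      intro t ht
      apply ENNReal.ofReal_le_ofReal
      have hQn := hQnnpt t ht
      have hrp : (0:ℝ) ≤ (1 - t) ^ (α - 1) := Real.rpow_nonneg (by linarith [ht.2]) _
      rw [show (1 / (1 - α)) * (α * (1 - t) ^ (α - 1) * Q t)
          = Q t * ((α / (1 - α)) * (1 - t) ^ (α - 1)) by field_simp]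
      apply mul_le_mul_of_nonneg_left _ hQn
      have h1 : (α / (1 - α)) * ((1 - t) ^ (α - 1) - 1) ≤ (α / (1 - α)) * (1 - t) ^ (α - 1) := by
        apply mul_le_mul_of_nonneg_left _ (div_nonneg hα0.le hα1'.le)
        linarith
      exact h1
    have hmono : (∫⁻ t in Set.Ioo (0:ℝ) 1,
          ENNReal.ofReal (Q t * ((α / (1 - α)) * ((1 - t) ^ (α - 1) - 1))))
        ≤ ∫⁻ t in Set.Ioo (0:ℝ) 1,
          ENNReal.ofReal ((1 / (1 - α)) * (α * (1 - t) ^ (α - 1) * Q t)) := by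
      apply lintegral_mono_ae
      exact (ae_restrict_iff' measurableSet_Ioo).2 (Filter.Eventually.of_forall hle)
    refine ne_top_of_le_ne_top ?_ hmono
    have h4 : ∀ t : ℝ, ENNReal.ofReal ((1 / (1 - α)) * (α * (1 - t) ^ (α - 1) * Q t))
        = ENNReal.ofReal (1 / (1 - α)) * ENNReal.ofReal (α * (1 - t) ^ (α - 1) * Q t) := fun t =>
      ENNReal.ofReal_mul (by positivity)
    simp_rw [h4]
    rw [lintegral_const_mul' _ _ ENNReal.ofReal_ne_top]
    exact ENNReal.mul_ne_top ENNReal.ofReal_ne_top hfin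
  -- integrability of g * W
  have hWcont : ContinuousOn W (Set.Ioo (0:ℝ) 1) := by
    have hQII : IntervalIntegrable Q volume 1 0 := by
      apply IntervalIntegrable.symm
      rw [intervalIntegrable_iff_integrableOn_Ioo_of_le zero_le_one]
      exact hQint
    have h := intervalIntegral.continuousOn_primitive_interval' hQII
      (by rw [Set.uIcc_of_ge zero_le_one]; exact Set.right_mem_Icc.2 zero_le_one)
    have h2 : ContinuousOn (fun p => -∫ x in (1:ℝ)..p, Q x) (Set.uIcc 1 0) := h.neg
    refine (h2.mono ?_).congr fun p hp => ?_
    · rw [Set.uIcc_of_ge zero_le_one]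
      exact Set.Ioo_subset_Icc_self
    · rw [hWdef]
      simp only []
      rw [intervalIntegral.integral_symm]
  have hGint : IntegrableOn (fun p => g p * W p) (Set.Ioo (0:ℝ) 1) volume := by
    constructor
    · exact hgmeas.aestronglyMeasurable.mul (hWcont.aestronglyMeasurable measurableSet_Ioo)
    · rw [hasFiniteIntegral_iff_ofReal ((ae_restrict_iff' measurableSet_Ioo).2
        (Filter.Eventually.of_forall fun p hp => mul_nonneg (hgnn p hp.2) (hWnn p hp)))]
      exact hBfin.lt_top
  -- value of the B integral
  have hrint : IntegrableOn (fun t => Q t * ((α / (1 - α)) * ((1 - t) ^ (α - 1) - 1)))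
      (Set.Ioo (0:ℝ) 1) volume := by
    have h1 : ∀ t : ℝ, Q t * ((α / (1 - α)) * ((1 - t) ^ (α - 1) - 1))
        = (1 / (1 - α)) * (α * (1 - t) ^ (α - 1) * Q t) - (α / (1 - α)) * Q t := by
      intro t
      field_simp
    simp_rw [h1]
    exact (hKint.const_mul (1 / (1 - α))).sub (hQint.const_mul (α / (1 - α)))
  have hJeq : (∫ p in Set.Ioo (0:ℝ) 1, g p * W p)
      = ∫ t in Set.Ioo (0:ℝ) 1, Q t * ((α / (1 - α)) * ((1 - t) ^ (α - 1) - 1)) := by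
    have h2 : ENNReal.ofReal (∫ p in Set.Ioo (0:ℝ) 1, g p * W p)
        = ENNReal.ofReal (∫ t in Set.Ioo (0:ℝ) 1,
            Q t * ((α / (1 - α)) * ((1 - t) ^ (α - 1) - 1))) := by
      rw [ofReal_integral_eq_lintegral_ofReal hGint ((ae_restrict_iff' measurableSet_Ioo).2
          (Filter.Eventually.of_forall fun p hp => mul_nonneg (hgnn p hp.2) (hWnn p hp))),
        ofReal_integral_eq_lintegral_ofReal hrint ((ae_restrict_iff' measurableSet_Ioo).2
          (Filter.Eventually.of_forall fun t ht => mul_nonneg (hQnnpt t ht) (hcnn t ht))),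
        hB]
    exact (ENNReal.ofReal_eq_ofReal_iff
      (setIntegral_nonneg measurableSet_Ioo fun p hp => mul_nonneg (hgnn p hp.2) (hWnn p hp))
      (setIntegral_nonneg measurableSet_Ioo fun t ht =>
        mul_nonneg (hQnnpt t ht) (hcnn t ht))).1 h2
  have hJval : (∫ p in Set.Ioo (0:ℝ) 1, g p * W p) * (1 - α) = K - α * μF := by
    rw [hJeq, hK, hμF]
    have h1 : ∀ t : ℝ, Q t * ((α / (1 - α)) * ((1 - t) ^ (α - 1) - 1))
        = (1 / (1 - α)) * (α * (1 - t) ^ (α - 1) * Q t) - (α / (1 - α)) * Q t := by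
      intro t
      field_simp
    simp_rw [h1]
    rw [integral_sub (hKint.const_mul (1 / (1 - α))) (hQint.const_mul (α / (1 - α))),
      integral_const_mul, integral_const_mul]
    field_simp
  -- the weight integrates to one
  have hwint : IntegrableOn (fun p => α * (1 - p) ^ (α - 1)) (Set.Ioo (0:ℝ) 1) volume :=
    (intervalIntegrable_iff_integrableOn_Ioo_of_le zero_le_one).1 (hrpow1_ii 0 1)
  have hwval : (∫ p in Set.Ioo (0:ℝ) 1, α * (1 - p) ^ (α - 1)) = 1 := by
    rw [← MeasureTheory.integral_Ioc_eq_integral_Ioo, ← intervalIntegral.integral_of_le zero_le_one,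
      hval1 0 le_rfl]
    simp
  -- rewrite the main integrand
  have hInt_eq : (∫ p in Set.Ioo (0:ℝ) 1, (UCE p / μF - 1) * (α * (1 - p) ^ (α - 1)))
      = (1 / μF) * (∫ p in Set.Ioo (0:ℝ) 1, g p * W p) - 1 := by
    have h1 : Set.EqOn (fun p => (UCE p / μF - 1) * (α * (1 - p) ^ (α - 1)))
        (fun p => (1 / μF) * (g p * W p) - α * (1 - p) ^ (α - 1)) (Set.Ioo (0:ℝ) 1) := by
      intro p hp
      simp only []
      rw [hUCE p, show (∫ t in p..(1:ℝ), Q t) = W p from rfl]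
      have hp1 : (0:ℝ) < 1 - p := by linarith [hp.2]
      have h2 : g p = α * ((1 - p) ^ (α - 1) / (1 - p)) := by
        rw [hgdef]
        simp only []
        rw [show α - 2 = α - 1 - 1 by ring, Real.rpow_sub hp1, Real.rpow_one]
      rw [h2]
      have hμne : μF ≠ 0 := ne_of_gt hμpos
      field_simp
    rw [setIntegral_congr_fun measurableSet_Ioo h1,
      integral_sub (hGint.const_mul (1 / μF)) hwint, integral_const_mul, hwval]
  -- final algebra
  rw [hInt_eq, ← hKval]
  have hμne : μF ≠ 0 := ne_of_gt hμpos
  have halg : μF * ((1 / μF * (∫ p in Set.Ioo (0:ℝ) 1, g p * W p) - 1) * (1 - α) + 1)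
      = (∫ p in Set.Ioo (0:ℝ) 1, g p * W p) * (1 - α) + α * μF := by
    field_simp
    ring
  rw [halg, hJval]
  ring
end

section
/- If nonnegative random variables X and Y with positive finite means satisfy the Lorenz ordering L_X(p) ≥ L_Y(p) for all p ∈ [0,1] (with L_X(p), L_Y(p) > 0 for p ∈ (0,1)), then UCE_X(p)/LCE_X(p) ≤ UCE_Y(p)/LCE_Y(p) for every p ∈ (0,1), and consequently R_X ≤ R_Y for any common gamble π on (0,1). -/
open MeasureTheory

theorem lorenz_ordering_implies_risk_ordering
    {Ω : Type*} [MeasureSpace Ω] [IsProbabilityMeasure (volume : Measure Ω)]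
    (QX QY : ℝ → ℝ)
    (hQXnn : ∀ t ∈ Set.Ioo (0:ℝ) 1, 0 ≤ QX t)
    (hQYnn : ∀ t ∈ Set.Ioo (0:ℝ) 1, 0 ≤ QY t)
    (hQXint : IntervalIntegrable QX volume 0 1)
    (hQYint : IntervalIntegrable QY volume 0 1)
    (μX μY : ℝ) (hμX : μX = ∫ t in (0:ℝ)..1, QX t) (hμY : μY = ∫ t in (0:ℝ)..1, QY t)
    (hμXpos : 0 < μX) (hμYpos : 0 < μY)
    (LX LY LCEX UCEX LCEY UCEY : ℝ → ℝ)
    (hLX : ∀ p, LX p = (∫ t in (0:ℝ)..p, QX t) / μX)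
    (hLY : ∀ p, LY p = (∫ t in (0:ℝ)..p, QY t) / μY)
    (hLCEX : ∀ p, LCEX p = (1 / p) * ∫ t in (0:ℝ)..p, QX t)
    (hUCEX : ∀ p, UCEX p = (1 / (1 - p)) * ∫ t in p..(1:ℝ), QX t)
    (hLCEY : ∀ p, LCEY p = (1 / p) * ∫ t in (0:ℝ)..p, QY t)
    (hUCEY : ∀ p, UCEY p = (1 / (1 - p)) * ∫ t in p..(1:ℝ), QY t)
    (hord : ∀ p ∈ Set.Icc (0:ℝ) 1, LY p ≤ LX p)
    (hposX : ∀ p ∈ Set.Ioo (0:ℝ) 1, 0 < LX p)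
    (hposY : ∀ p ∈ Set.Ioo (0:ℝ) 1, 0 < LY p)
    (π : Ω → ℝ) (hπ : ∀ ω, π ω ∈ Set.Ioo (0:ℝ) 1)
    (hintX : Integrable (fun ω => UCEX (π ω) / LCEX (π ω) - 1))
    (hintY : Integrable (fun ω => UCEY (π ω) / LCEY (π ω) - 1)) :
    (∀ p ∈ Set.Ioo (0:ℝ) 1, UCEX p / LCEX p ≤ UCEY p / LCEY p)
      ∧ ∫ ω, (UCEX (π ω) / LCEX (π ω) - 1) ≤ ∫ ω, (UCEY (π ω) / LCEY (π ω) - 1) := by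

  have key : ∀ p ∈ Set.Ioo (0:ℝ) 1, UCEX p / LCEX p ≤ UCEY p / LCEY p := by
    intro p hp
    obtain ⟨hp0, hp1⟩ := hp
    have hp1' : (0:ℝ) < 1 - p := by linarith
    have hmem : p ∈ Set.Icc (0:ℝ) 1 := ⟨le_of_lt hp0, le_of_lt hp1⟩
    set IX := ∫ t in (0:ℝ)..p, QX t with hIX
    set IY := ∫ t in (0:ℝ)..p, QY t with hIY
    have hIXpos : 0 < IX := by
      have := hposX p ⟨hp0, hp1⟩
      rw [hLX] at this
      exact (div_pos_iff.mp this).resolve_right (fun h => absurd h.2 (not_lt.mpr hμXpos.le)) |>.1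
    have hIYpos : 0 < IY := by
      have := hposY p ⟨hp0, hp1⟩
      rw [hLY] at this
      exact (div_pos_iff.mp this).resolve_right (fun h => absurd h.2 (not_lt.mpr hμYpos.le)) |>.1
    have hsub : Set.uIcc (0:ℝ) p ⊆ Set.uIcc (0:ℝ) 1 := by
      rw [Set.uIcc_of_le hp0.le, Set.uIcc_of_le zero_le_one]
      exact Set.Icc_subset_Icc le_rfl hp1.le
    have hsub2 : Set.uIcc p (1:ℝ) ⊆ Set.uIcc (0:ℝ) 1 := by
      rw [Set.uIcc_of_le hp1.le, Set.uIcc_of_le zero_le_one]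
      exact Set.Icc_subset_Icc hp0.le le_rfl
    have hX1 : IntervalIntegrable QX volume 0 p := hQXint.mono_set hsub
    have hX2 : IntervalIntegrable QX volume p 1 := hQXint.mono_set hsub2
    have hY1 : IntervalIntegrable QY volume 0 p := hQYint.mono_set hsub
    have hY2 : IntervalIntegrable QY volume p 1 := hQYint.mono_set hsub2
    have hXsplit : (∫ t in p..(1:ℝ), QX t) = μX - IX := by
      have := intervalIntegral.integral_add_adjacent_intervals hX1 hX2
      rw [hμX]; linarith [this]
    have hYsplit : (∫ t in p..(1:ℝ), QY t) = μY - IY := by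
      have := intervalIntegral.integral_add_adjacent_intervals hY1 hY2
      rw [hμY]; linarith [this]
    have hratX : UCEX p / LCEX p = p / (1 - p) * (1 / LX p - 1) := by
      rw [hUCEX, hLCEX, hLX, hXsplit, ← hIX]
      field_simp
    have hratY : UCEY p / LCEY p = p / (1 - p) * (1 / LY p - 1) := by
      rw [hUCEY, hLCEY, hLY, hYsplit, ← hIY]
      field_simp
    rw [hratX, hratY]
    have h1 : 1 / LX p ≤ 1 / LY p :=
      one_div_le_one_div_of_le (hposY p ⟨hp0, hp1⟩) (hord p hmem)
    have h2 : 0 ≤ p / (1 - p) := div_nonneg hp0.le hp1'.le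
    nlinarith
  refine ⟨key, ?_⟩
  exact integral_mono hintX hintY (fun ω => by
    have := key (π ω) (hπ ω)
    simp only []
    linarith)
end

section
/- Let X be a nonnegative random variable with cdf F, positive finite mean μ_F, and let π ∼ Beta(2,1) with density f(p) = 2p on (0,1). Then E[1 − LCE_F(π)/μ_F] = 1 − (2/μ_F)∫₀¹ F^{-1}(t)(1−t) dt, which equals the Gini index G_F = 2∫₀¹ (p − L_F(p)) dp. -/
open MeasureTheory

lemma swap_aux (Q : ℝ → ℝ) (hQ : IntegrableOn Q (Set.Ioo (0:ℝ) 1)) :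
    ∫ p in Set.Ioo (0:ℝ) 1, (∫ t in Set.Ioo (0:ℝ) p, Q t)
      = ∫ t in Set.Ioo (0:ℝ) 1, Q t * (1 - t) := by
  set μ : Measure ℝ := volume.restrict (Set.Ioo 0 1) with hμ
  have hfin : IsFiniteMeasure μ := by
    constructor
    simp [hμ, Real.volume_Ioo]
  set f : ℝ → ℝ → ℝ := fun p t => (Set.Iio p).indicator Q t with hf
  have huncurry : Function.uncurry f = {z : ℝ × ℝ | z.2 < z.1}.indicator (fun z => Q z.2) := by
    ext ⟨p, t⟩
    simp [Function.uncurry, hf, Set.indicator_apply]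
  have hQμ : Integrable Q μ := hQ
  have h1 : Integrable (fun z : ℝ × ℝ => Q z.2) (μ.prod μ) := by
    have h := (integrable_const (μ := μ) (1:ℝ)).mul_prod hQμ
    simpa using h
  have hint : Integrable (Function.uncurry f) (μ.prod μ) := by
    rw [huncurry]
    exact h1.indicator (measurableSet_lt measurable_snd measurable_fst)
  have swap := integral_integral_swap hint
  have hL : ∀ p ∈ Set.Ioo (0:ℝ) 1, (∫ t, f p t ∂μ) = ∫ t in Set.Ioo (0:ℝ) p, Q t := by
    intro p hp
    rw [hf]
    rw [integral_indicator measurableSet_Iio, hμ, Measure.restrict_restrict measurableSet_Iio]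
    have hset : Set.Iio p ∩ Set.Ioo (0:ℝ) 1 = Set.Ioo 0 p := by
      ext t
      simp only [Set.mem_inter_iff, Set.mem_Iio, Set.mem_Ioo]
      exact ⟨fun ⟨h1, h2, _⟩ => ⟨h2, h1⟩, fun ⟨h1, h2⟩ => ⟨h2, h1, h2.trans hp.2⟩⟩
    rw [hset]
  have hR : ∀ t ∈ Set.Ioo (0:ℝ) 1, (∫ p, f p t ∂μ) = Q t * (1 - t) := by
    intro t ht
    have : (fun p => f p t) = (Set.Ioi t).indicator (fun _ => Q t) := by
      ext p
      simp only [hf, Set.indicator_apply, Set.mem_Iio, Set.mem_Ioi]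
    rw [this, integral_indicator_const _ measurableSet_Ioi, hμ,
      measureReal_def, Measure.restrict_apply measurableSet_Ioi]
    have : Set.Ioi t ∩ Set.Ioo (0:ℝ) 1 = Set.Ioo t 1 := by
      ext x
      simp only [Set.mem_inter_iff, Set.mem_Ioi, Set.mem_Ioo]
      exact ⟨fun ⟨h1,_,h3⟩ => ⟨h1,h3⟩, fun ⟨h1,h2⟩ => ⟨h1, ht.1.trans h1, h2⟩⟩
    rw [this, Real.volume_Ioo, ENNReal.toReal_ofReal (by linarith [ht.2]), smul_eq_mul]
    ring
  calc ∫ p in Set.Ioo (0:ℝ) 1, (∫ t in Set.Ioo (0:ℝ) p, Q t)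
      = ∫ p, (∫ t, f p t ∂μ) ∂μ := (setIntegral_congr_fun measurableSet_Ioo (fun p hp => (hL p hp).symm))
    _ = ∫ t, (∫ p, f p t ∂μ) ∂μ := swap
    _ = ∫ t in Set.Ioo (0:ℝ) 1, Q t * (1 - t) := setIntegral_congr_fun measurableSet_Ioo hR

theorem gini_as_expected_relative_lce
    (Q : ℝ → ℝ) (hQnn : ∀ t ∈ Set.Ioo (0:ℝ) 1, 0 ≤ Q t)
    (hQint : IntervalIntegrable Q volume 0 1)
    (μF : ℝ) (hμF : μF = ∫ t in (0:ℝ)..1, Q t) (hμpos : 0 < μF)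
    (L LCE : ℝ → ℝ)
    (hL : ∀ p, L p = (∫ t in (0:ℝ)..p, Q t) / μF)
    (hLCE : ∀ p, LCE p = (1 / p) * ∫ t in (0:ℝ)..p, Q t) :
    ∫ p in Set.Ioo (0:ℝ) 1, (1 - LCE p / μF) * (2 * p)
        = 1 - (2 / μF) * ∫ t in (0:ℝ)..1, Q t * (1 - t)
      ∧ 1 - (2 / μF) * ∫ t in (0:ℝ)..1, Q t * (1 - t)
        = 2 * ∫ p in (0:ℝ)..1, (p - L p) := by
  set G : ℝ → ℝ := fun p => ∫ t in (0:ℝ)..p, Q t with hG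
  have hQIoo : IntegrableOn Q (Set.Ioo (0:ℝ) 1) := by
    have h := (intervalIntegrable_iff_integrableOn_Ioc_of_le (by norm_num : (0:ℝ) ≤ 1)).1 hQint
    exact h.mono_set Set.Ioo_subset_Ioc_self
  have hGcont : ContinuousOn G (Set.uIcc (0:ℝ) 1) :=
    intervalIntegral.continuousOn_primitive_interval' hQint Set.left_mem_uIcc
  have hGcontIcc : ContinuousOn G (Set.Icc (0:ℝ) 1) := by
    rwa [Set.uIcc_of_le (by norm_num : (0:ℝ) ≤ 1)] at hGcont
  have hGIoo : IntegrableOn G (Set.Ioo (0:ℝ) 1) :=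
    (hGcontIcc.integrableOn_Icc).mono_set Set.Ioo_subset_Icc_self
  -- interval integral = Ioo integral for G evaluation
  have hGval : ∀ p ∈ Set.Ioo (0:ℝ) 1, G p = ∫ t in Set.Ioo (0:ℝ) p, Q t := by
    intro p hp
    show (∫ t in (0:ℝ)..p, Q t) = ∫ t in Set.Ioo (0:ℝ) p, Q t
    rw [intervalIntegral.integral_of_le hp.1.le, integral_Ioc_eq_integral_Ioo]
  have hswap : ∫ p in Set.Ioo (0:ℝ) 1, G p = ∫ t in Set.Ioo (0:ℝ) 1, Q t * (1 - t) := by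
    rw [setIntegral_congr_fun measurableSet_Ioo hGval]
    exact swap_aux Q hQIoo
  have hQt1 : ∫ t in (0:ℝ)..1, Q t * (1 - t) = ∫ t in Set.Ioo (0:ℝ) 1, Q t * (1 - t) := by
    rw [intervalIntegral.integral_of_le (by norm_num : (0:ℝ) ≤ 1), integral_Ioc_eq_integral_Ioo]
  have hGint : ∫ p in Set.Ioo (0:ℝ) 1, G p = ∫ t in (0:ℝ)..1, Q t * (1 - t) := by
    rw [hswap, hQt1]
  have h2p : ∫ p in Set.Ioo (0:ℝ) 1, 2 * p = 1 := by
    rw [← integral_Ioc_eq_integral_Ioo,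
      ← intervalIntegral.integral_of_le (by norm_num : (0:ℝ) ≤ 1),
      intervalIntegral.integral_const_mul, integral_id]
    norm_num
  have h2pint : IntegrableOn (fun p : ℝ => 2 * p) (Set.Ioo (0:ℝ) 1) :=
    ((continuous_const.mul continuous_id).integrableOn_Icc (a := 0) (b := 1)).mono_set
      Set.Ioo_subset_Icc_self
  constructor
  · have hcongr : ∀ p ∈ Set.Ioo (0:ℝ) 1,
        (1 - LCE p / μF) * (2 * p) = 2 * p - (2 / μF) * G p := by
      intro p hp
      rw [hLCE p]
      have hp0 : p ≠ 0 := ne_of_gt hp.1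
      field_simp
      ring
    rw [setIntegral_congr_fun measurableSet_Ioo hcongr,
      integral_sub h2pint (hGIoo.const_mul _), h2p, integral_const_mul, hGint]
  · have hLint : IntervalIntegrable L volume 0 1 := by
      have : ContinuousOn L (Set.uIcc (0:ℝ) 1) := by
        have : L = fun p => G p / μF := by funext p; rw [hL p]
        rw [this]
        exact hGcont.div_const μF
      exact this.intervalIntegrable
    have hid : IntervalIntegrable (fun p : ℝ => p) volume 0 1 :=
      (continuous_id).intervalIntegrable 0 1
    rw [intervalIntegral.integral_sub hid hLint, integral_id]
    have hLval : ∫ p in (0:ℝ)..1, L p = (∫ t in (0:ℝ)..1, Q t * (1 - t)) / μF := by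
      have : ∀ p, L p = G p / μF := fun p => hL p
      simp_rw [this]
      rw [intervalIntegral.integral_div]
      congr 1
      rw [intervalIntegral.integral_of_le (by norm_num : (0:ℝ) ≤ 1),
        integral_Ioc_eq_integral_Ioo]
      exact hGint
    rw [hLval]
    field_simp
    ring
end
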